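/- arXiv:1511.01184 — 9 statements merged into one kernel-verified Lean document; each statement's English description precedes it below -/
import Mathlib

section
/- Suppose max(λ10, λ20) ≤ 1. Then every solution u : [0,∞) → ℝ² of u' = F(u) with u(0) ∈ Λ satisfies u(t) → (0,0) as t → ∞ (i.e., the extinction equilibrium (0,0) is globally stable on all of Λ). -/
/-!
The triangle `Λ` is forward invariant: `u₂' = a₂ u₂` for a continuous coefficient `a₂`; then
`u₁' ≥ a₁ u₁` because `δ u₂ ≥ 0`; then `w = 1 - u₁ - u₂` has `w' = -(λ10 u₁ + λ20 u₂) w + u₁ + u₂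
≥ a₃ w`; and a linear differential inequality `f' ≥ a f` keeps `f` nonnegative. Inside `Λ`, when
`λ10, λ20 ≤ 1`, the total density `v = u₁ + u₂` satisfies `v' ≤ -v²`, so comparison with the
solution `1 / (t + 1)` of `y' = -y²` squeezes both coordinates to `0`.
-/

open Filter Topology Set

/-- Mean-field vector field of the generalized stacked contact process. -/
noncomputable def meanField (l10 l20 l21 δ : ℝ) (p : ℝ × ℝ) : ℝ × ℝ :=
  (l10 * p.1 * (1 - p.1 - p.2) - p.1 + δ * p.2 - l21 * p.1 * p.2,
   l20 * p.2 * (1 - p.1 - p.2) - p.2 - δ * p.2 + l21 * p.1 * p.2)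

/-- The feasible region Λ. -/
def lambdaRegion : Set (ℝ × ℝ) := {p | 0 ≤ p.1 ∧ 0 ≤ p.2 ∧ p.1 + p.2 ≤ 1}

/-- The region Λ₊ : if δ = 0 both coordinates positive, if δ > 0 only u₂ > 0. -/
def lambdaPlus (δ : ℝ) : Set (ℝ × ℝ) :=
  {p | p ∈ lambdaRegion ∧ 0 < p.2 ∧ (δ = 0 → 0 < p.1)}

/-- A solution of the mean-field ODE on [0,∞). -/
def IsSolution (l10 l20 l21 δ : ℝ) (u : ℝ → ℝ × ℝ) : Prop :=
  ∀ t : ℝ, 0 ≤ t → HasDerivWithinAt u (meanField l10 l20 l21 δ (u t)) (Set.Ici 0) t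

theorem HasDerivWithinAt.fst {f : ℝ → ℝ × ℝ} {f' : ℝ × ℝ} {s : Set ℝ} {x : ℝ}
    (h : HasDerivWithinAt f f' s x) : HasDerivWithinAt (fun t => (f t).1) f'.1 s x :=
  (ContinuousLinearMap.fst ℝ ℝ ℝ).hasFDerivAt.comp_hasDerivWithinAt x h

theorem HasDerivWithinAt.snd {f : ℝ → ℝ × ℝ} {f' : ℝ × ℝ} {s : Set ℝ} {x : ℝ}
    (h : HasDerivWithinAt f f' s x) : HasDerivWithinAt (fun t => (f t).2) f'.2 s x :=
  (ContinuousLinearMap.snd ℝ ℝ ℝ).hasFDerivAt.comp_hasDerivWithinAt x h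

section Comparison

variable {f f' : ℝ → ℝ}

/-- On `[0, t]` the continuous coefficient `a` stays below some `C`, so `-f` stays below every
barrier `ε e^{(C+1)x}`. -/
theorem nonneg_of_mul_le_hasDerivWithinAt {a : ℝ → ℝ} (ha : ContinuousOn a (Ici 0))
    (hf : ∀ t ≥ 0, HasDerivWithinAt f (f' t) (Ici 0) t) (hbound : ∀ t ≥ 0, a t * f t ≤ f' t)
    (h0 : 0 ≤ f 0) {t : ℝ} (ht : 0 ≤ t) : 0 ≤ f t := by
  obtain ⟨C, hC⟩ := (isCompact_Icc.bddAbove_image (ha.mono Icc_subset_Ici_self) :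
    BddAbove (a '' Icc 0 t))
  have hbarrier : ∀ ε > 0, -f t ≤ ε * Real.exp ((C + 1) * t) := by
    intro ε hε
    refine image_le_of_deriv_right_lt_deriv_boundary' (f := fun x => -f x) (f' := fun x => -f' x)
      (B := fun x => ε * Real.exp ((C + 1) * x))
      (B' := fun x => (C + 1) * (ε * Real.exp ((C + 1) * x)))
      (fun x hx => (hf x hx.1).continuousWithinAt.neg.mono Icc_subset_Ici_self)
      (fun x hx => ((hf x hx.1).mono (Ici_subset_Ici.2 hx.1)).neg) (by simp only [mul_zero, Real.exp_zero, mul_one]; linarith)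
      (by fun_prop) (fun x _ => ?_) (fun x hx hfx => ?_) (right_mem_Icc.2 ht)
    · exact (((hasDerivAt_id' x).const_mul (C + 1)).exp.const_mul ε).hasDerivWithinAt.congr_deriv
        (by ring)
    · have haC : a x ≤ C := hC ⟨x, Ico_subset_Icc_self hx, rfl⟩
      have hpos : 0 < -f x := hfx ▸ by positivity
      have hmul : a x * -f x < (C + 1) * -f x := by nlinarith
      simp only [← hfx]
      linarith [hbound x hx.1]
  have hE : 0 < Real.exp ((C + 1) * t) := Real.exp_pos _
  refine neg_nonpos.1 (le_of_forall_pos_le_add fun ε hε => ?_)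
  simpa [div_mul_cancel₀ _ hE.ne'] using hbarrier (ε / Real.exp ((C + 1) * t)) (by positivity)

/-- `(t + 1)⁻¹ + ε` is a strict upper barrier for every `ε > 0`. -/
theorem le_inv_add_one_of_hasDerivWithinAt_le_neg_sq
    (hf : ∀ t ≥ 0, HasDerivWithinAt f (f' t) (Ici 0) t) (hbound : ∀ t ≥ 0, f' t ≤ -f t ^ 2)
    (h0 : f 0 ≤ 1) {t : ℝ} (ht : 0 ≤ t) : f t ≤ (t + 1)⁻¹ := by
  refine le_of_forall_pos_le_add fun ε hε => ?_
  refine image_le_of_deriv_right_lt_deriv_boundary' (B := fun x => (x + 1)⁻¹ + ε)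
    (B' := fun x => -1 / (x + 1) ^ 2)
    (fun x hx => (hf x hx.1).continuousWithinAt.mono Icc_subset_Ici_self)
    (fun x hx => (hf x hx.1).mono (Ici_subset_Ici.2 hx.1)) (by simp only [zero_add, inv_one]; linarith)
    ?_ (fun x hx => ?_) (fun x hx hfx => ?_) (right_mem_Icc.2 ht)
  · exact ((continuous_id'.add continuous_const).continuousOn.inv₀
      fun x hx => (by linarith [hx.1] : (0 : ℝ) < x + 1).ne').add continuousOn_const
  · have hx1 : x + 1 ≠ 0 := by linarith [hx.1]
    simpa using ((((hasDerivAt_id' x).add_const 1).inv hx1).add_const ε).hasDerivWithinAt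
  · have hx1 : 0 < (x + 1)⁻¹ := inv_pos.2 (by linarith [hx.1])
    have hsq : ((x + 1)⁻¹) ^ 2 < f x ^ 2 := by rw [hfx]; gcongr; linarith
    calc f' x ≤ -f x ^ 2 := hbound x hx.1
      _ < -((x + 1)⁻¹) ^ 2 := by linarith
      _ = -1 / (x + 1) ^ 2 := by rw [inv_pow, neg_div, one_div]

end Comparison

namespace IsSolution

variable {l10 l20 l21 δ : ℝ} {u : ℝ → ℝ × ℝ}

theorem continuousOn (hu : IsSolution l10 l20 l21 δ u) : ContinuousOn u (Ici 0) :=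
  fun t ht => (hu t ht).continuousWithinAt

theorem mem_lambdaRegion (hδ : 0 ≤ δ) (hu : IsSolution l10 l20 l21 δ u)
    (h0 : u 0 ∈ lambdaRegion) {t : ℝ} (ht : 0 ≤ t) : u t ∈ lambdaRegion := by
  have hcont := hu.continuousOn
  have hnonneg₂ : ∀ s ≥ 0, 0 ≤ (u s).2 :=
    fun s => nonneg_of_mul_le_hasDerivWithinAt
      (a := fun s => l20 * (1 - (u s).1 - (u s).2) - 1 - δ + l21 * (u s).1) (by fun_prop)
      (fun s hs => (hu s hs).snd) (fun s _ => by simp only [meanField]; linarith) h0.2.1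
  have hnonneg₁ : ∀ s ≥ 0, 0 ≤ (u s).1 :=
    fun s => nonneg_of_mul_le_hasDerivWithinAt
      (a := fun s => l10 * (1 - (u s).1 - (u s).2) - 1 - l21 * (u s).2) (by fun_prop)
      (fun s hs => (hu s hs).fst)
      (fun s hs => by simp only [meanField]; nlinarith [hnonneg₂ s hs]) h0.1
  have hsum : ∀ s ≥ 0, 0 ≤ 1 - (u s).1 - (u s).2 :=
    fun s => nonneg_of_mul_le_hasDerivWithinAt
      (f := fun s => 1 - (u s).1 - (u s).2) (a := fun s => -(l10 * (u s).1 + l20 * (u s).2))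
      (by fun_prop)
      (fun s hs => (((hu s hs).fst.const_sub 1).sub (hu s hs).snd))
      (fun s hs => by simp only [meanField]; nlinarith [hnonneg₁ s hs, hnonneg₂ s hs])
      (by linarith [h0.2.2])
  exact ⟨hnonneg₁ t ht, hnonneg₂ t ht, by linarith [hsum t ht]⟩

/-- For `v = u₁ + u₂`: `v' = (λ10 u₁ + λ20 u₂)(1 - v) - v ≤ v (1 - v) - v = -v²`. -/
theorem fst_add_snd_le (hδ : 0 ≤ δ) (h10 : l10 ≤ 1) (h20 : l20 ≤ 1)
    (hu : IsSolution l10 l20 l21 δ u) (h0 : u 0 ∈ lambdaRegion) {t : ℝ} (ht : 0 ≤ t) :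
    (u t).1 + (u t).2 ≤ (t + 1)⁻¹ := by
  refine le_inv_add_one_of_hasDerivWithinAt_le_neg_sq (f := fun s => (u s).1 + (u s).2)
    (fun s hs => (hu s hs).fst.add (hu s hs).snd) (fun s hs => ?_) h0.2.2 ht
  obtain ⟨h1, h2, h12⟩ := hu.mem_lambdaRegion hδ h0 hs
  simp only [meanField]
  nlinarith [mul_nonneg (mul_nonneg (sub_nonneg.2 h10) h1) (sub_nonneg.2 h12),
    mul_nonneg (mul_nonneg (sub_nonneg.2 h20) h2) (sub_nonneg.2 h12)]

end IsSolution

theorem extinction_globally_stable_general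
    (l10 l20 l21 δ : ℝ) (hδ : 0 ≤ δ)
    (hmax : max l10 l20 ≤ 1)
    (u : ℝ → ℝ × ℝ) (hu : IsSolution l10 l20 l21 δ u)
    (h0 : u 0 ∈ lambdaRegion) :
    Tendsto u atTop (𝓝 ((0 : ℝ), (0 : ℝ))) := by
  obtain ⟨h10, h20⟩ := max_le_iff.1 hmax
  have hdecay : Tendsto (fun t : ℝ => (t + 1)⁻¹) atTop (𝓝 0) :=
    tendsto_inv_atTop_zero.comp (tendsto_atTop_add_const_right _ 1 tendsto_id)
  have hmem : ∀ᶠ t in atTop, u t ∈ lambdaRegion ∧ (u t).1 + (u t).2 ≤ (t + 1)⁻¹ :=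
    (eventually_ge_atTop 0).mono fun t ht =>
      ⟨hu.mem_lambdaRegion hδ h0 ht, hu.fst_add_snd_le hδ h10 h20 h0 ht⟩
  rw [nhds_prod_eq]
  refine (squeeze_zero' (hmem.mono fun t ht => ht.1.1) (hmem.mono fun t ht => ?_) hdecay).prodMk
    (squeeze_zero' (hmem.mono fun t ht => ht.1.2.1) (hmem.mono fun t ht => ?_) hdecay)
  · linarith [ht.1.2.1, ht.2]
  · linarith [ht.1.1, ht.2]

/-- If max(λ10, λ20) ≤ 1, every solution starting in Λ converges to (0,0). -/
theorem extinction_globally_stable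
    (l10 l20 l21 δ : ℝ) (h10 : 0 ≤ l10) (h20 : 0 ≤ l20) (h21 : 0 ≤ l21) (hδ : 0 ≤ δ)
    (hmax : max l10 l20 ≤ 1)
    (u : ℝ → ℝ × ℝ) (hu : IsSolution l10 l20 l21 δ u)
    (h0 : u 0 ∈ lambdaRegion) :
    Tendsto u atTop (𝓝 ((0 : ℝ), (0 : ℝ))) :=
  extinction_globally_stable_general l10 l20 l21 δ hδ hmax u hu h0
end

section
/- Suppose δ = 0, λ10 > 1, the inequality λ20/λ10 + λ21·(1 − 1/λ10) > 1 + δ does NOT hold, and λ10/λ20 − λ21·(1 − 1/λ20) > 1. Then the equilibrium p = (1 − 1/λ10, 0) is globally stable on Λ+: every solution u : [0,∞) → ℝ² of u' = F(u) with u(0) ∈ Λ+ satisfies u(t) → (1 − 1/λ10, 0) as t → ∞. -/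
open Filter Topology Set Real

section Comparison

variable {f f' g : ℝ → ℝ} {a : ℝ}

theorem monotoneOn_Ici_of_hasDerivWithinAt_nonneg
    (hf : ∀ t ∈ Ici a, HasDerivWithinAt f (f' t) (Ici a) t)
    (hf' : ∀ t ∈ Ici a, 0 ≤ f' t) : MonotoneOn f (Ici a) := by
  refine monotoneOn_of_hasDerivWithinAt_nonneg (f' := f') (convex_Ici a)
    (fun t ht => (hf t ht).continuousWithinAt) (fun t ht => ?_) (fun t ht => ?_)
  · rw [interior_Ici] at ht ⊢
    exact (hf t (mem_Ici.2 ht.le)).mono Ioi_subset_Ici_self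
  · rw [interior_Ici] at ht
    exact hf' t (mem_Ici.2 ht.le)

theorem hasDerivWithinAt_integral_Ici (hg : ContinuousOn g (Ici a)) {t : ℝ} (ht : t ∈ Ici a) :
    HasDerivWithinAt (fun s => ∫ x in a..s, g x) (g t) (Ici a) t := by
  have hcont : Continuous fun x => g (max x a) :=
    hg.comp_continuous (continuous_id.max continuous_const) fun x => le_max_right x a
  have hext : EqOn (fun s => ∫ x in a..s, g x) (fun s => ∫ x in a..s, g (max x a)) (Ici a) :=
    fun s hs => intervalIntegral.integral_congr fun x hx => by
      rw [uIcc_of_le hs] at hx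
      simp [max_eq_left hx.1]
  have := (hcont.integral_hasStrictDerivAt a t).hasDerivAt.hasDerivWithinAt (s := Ici a)
  rw [max_eq_left ht] at this
  exact this.congr hext (hext ht)

theorem mul_exp_integral_le (hf : ∀ t ∈ Ici a, HasDerivWithinAt f (f' t) (Ici a) t)
    (hg : ContinuousOn g (Ici a)) (hle : ∀ t ∈ Ici a, f t * g t ≤ f' t) :
    ∀ t ∈ Ici a, f a * exp (∫ x in a..t, g x) ≤ f t := by
  set G := fun t => ∫ x in a..t, g x
  have hmono : MonotoneOn (fun t => f t * exp (-G t)) (Ici a) := by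
    refine monotoneOn_Ici_of_hasDerivWithinAt_nonneg
      (f' := fun t => (f' t - f t * g t) * exp (-G t)) (fun t ht =>
        ((hf t ht).mul (hasDerivWithinAt_integral_Ici hg ht).neg.exp).congr_deriv
          (by simp only [Pi.neg_apply, G]; ring)) fun t ht => ?_
    have := sub_nonneg.2 (hle t ht)
    positivity
  intro t ht
  have h := hmono self_mem_Ici ht ht
  simp only [G, intervalIntegral.integral_same, neg_zero, exp_zero, mul_one] at h
  calc f a * exp (G t) ≤ f t * exp (-G t) * exp (G t) := by gcongr
    _ = f t := by rw [mul_assoc, ← exp_add, neg_add_cancel, exp_zero, mul_one]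

theorem eventually_lt_of_deriv_le_sub_mul {A κ b : ℝ} (hκ : 0 < κ)
    (hf : ∀ t ∈ Ici a, HasDerivWithinAt f (f' t) (Ici a) t)
    (hle : ∀ᶠ t in atTop, f' t ≤ A - κ * f t) (hb : A / κ < b) :
    ∀ᶠ t in atTop, f t < b := by
  obtain ⟨T, hT⟩ := eventually_atTop.1 hle
  set T' := max T a
  have hT'a : Ici T' ⊆ Ici a := Ici_subset_Ici.2 (le_max_right T a)
  have hdecay : ∀ t ∈ Ici T', (A / κ - f T') * exp (-(κ * (t - T'))) ≤ A / κ - f t := by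
    have := mul_exp_integral_le (f := fun t => A / κ - f t) (g := fun _ => -κ)
      (fun t ht => ((hf t (hT'a ht)).mono hT'a).const_sub (A / κ)) continuousOn_const
      fun t ht => by
        have := hT t (le_trans (le_max_left T a) ht)
        field_simp
        linarith
    simpa [mul_comm] using this
  have hexp : Tendsto (fun t => exp (-(κ * (t - T')))) atTop (𝓝 0) :=
    tendsto_exp_neg_atTop_nhds_zero.comp <| Tendsto.const_mul_atTop hκ <|
      tendsto_atTop_add_const_right atTop (-T') tendsto_id
  have hlim : Tendsto (fun t => A / κ - (A / κ - f T') * exp (-(κ * (t - T')))) atTop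
      (𝓝 (A / κ)) := by
    simpa using (hexp.const_mul (A / κ - f T')).const_sub (A / κ)
  filter_upwards [hlim.eventually_lt_const hb, eventually_ge_atTop T'] with t hlt ht
  linarith [hdecay t ht]

theorem eventually_gt_of_sub_mul_le_deriv {A κ b : ℝ} (hκ : 0 < κ)
    (hf : ∀ t ∈ Ici a, HasDerivWithinAt f (f' t) (Ici a) t)
    (hle : ∀ᶠ t in atTop, A - κ * f t ≤ f' t) (hb : b < A / κ) :
    ∀ᶠ t in atTop, b < f t := by
  have := eventually_lt_of_deriv_le_sub_mul (f := fun t => -f t) (A := -A) (b := -b) hκ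
    (fun t ht => (hf t ht).neg) (hle.mono fun t ht => by linarith) (by rw [neg_div]; linarith)
  exact this.mono fun t ht => neg_lt_neg_iff.1 ht

/-- Barbalat-type argument: `f t ≤ exp M * ∫ₜ^{t+1} f`, and these increments of the bounded
monotone function `t ↦ ∫ₐᵗ f` tend to `0`. -/
theorem tendsto_zero_of_integral_le {M C : ℝ} (hM : 0 ≤ M)
    (hf : ∀ t ∈ Ici a, HasDerivWithinAt f (f' t) (Ici a) t)
    (hf' : ∀ t ∈ Ici a, -M * f t ≤ f' t) (hnn : ∀ t ∈ Ici a, 0 ≤ f t)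
    (hC : ∀ t ∈ Ici a, ∫ x in a..t, f x ≤ C) :
    Tendsto f atTop (𝓝 0) := by
  have hfc : ContinuousOn f (Ici a) := fun t ht => (hf t ht).continuousWithinAt
  have hfi : ∀ b c, a ≤ b → b ≤ c → IntervalIntegrable f MeasureTheory.volume b c :=
    fun b c hb hbc => (hfc.mono fun x hx => le_trans hb hx.1).intervalIntegrable_of_Icc hbc
  set I := fun t => ∫ x in a..t, f x
  have hI : MonotoneOn I (Ici a) :=
    monotoneOn_Ici_of_hasDerivWithinAt_nonneg (fun t ht => hasDerivWithinAt_integral_Ici hfc ht)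
      hnn
  obtain ⟨L, hL⟩ : ∃ L, Tendsto I atTop (𝓝 L) := by
    have hmono : Monotone fun t => I (max t a) := fun s t hst =>
      hI (le_max_right s a) (le_max_right t a) (max_le_max hst le_rfl)
    refine ⟨_, (tendsto_atTop_ciSup hmono ⟨C, ?_⟩).congr' ?_⟩
    · rintro _ ⟨t, rfl⟩
      exact hC _ (le_max_right t a)
    · filter_upwards [eventually_ge_atTop a] with t ht
      rw [max_eq_left ht]
  have hincr : Tendsto (fun t => I (t + 1) - I t) atTop (𝓝 0) := by
    simpa using (hL.comp (tendsto_atTop_add_const_right atTop 1 tendsto_id)).sub hL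
  have hbound : ∀ t ∈ Ici a, f t ≤ exp M * (I (t + 1) - I t) := by
    intro t ht
    have hsub : Ici t ⊆ Ici a := Ici_subset_Ici.2 ht
    have hgrowth := mul_exp_integral_le (a := t) (g := fun _ => -M)
      (fun s hs => (hf s (hsub hs)).mono hsub) continuousOn_const
      fun s hs => by linarith [hf' s (hsub hs)]
    have hint : ∫ x in t..t + 1, f t * exp (-M) ≤ ∫ x in t..t + 1, f x := by
      refine intervalIntegral.integral_mono_on (by linarith) intervalIntegrable_const
        (hfi t (t + 1) ht (by linarith)) fun s hs => ?_
      have hexp : exp (-M) ≤ exp (∫ _ in t..s, -M) := by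
        rw [intervalIntegral.integral_const, smul_eq_mul, exp_le_exp]
        nlinarith [hs.1, hs.2]
      exact le_trans (mul_le_mul_of_nonneg_left hexp (hnn t ht)) (hgrowth s hs.1)
    have hdiff : I (t + 1) - I t = ∫ x in t..t + 1, f x :=
      intervalIntegral.integral_interval_sub_left
        (hfi a (t + 1) le_rfl (by linarith [mem_Ici.1 ht])) (hfi a t le_rfl ht)
    rw [intervalIntegral.integral_const, smul_eq_mul, add_sub_cancel_left, one_mul] at hint
    rw [hdiff, ← div_le_iff₀' (exp_pos M), div_eq_mul_inv, ← exp_neg]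
    exact hint
  exact squeeze_zero' (eventually_ge_atTop a |>.mono hnn)
    (eventually_ge_atTop a |>.mono hbound) (by simpa using hincr.const_mul (exp M))

theorem le_sub_integral_of_deriv_le {V V' : ℝ → ℝ} {d b : ℝ} (hf : ContinuousOn f (Ici a))
    (hV : ∀ t ∈ Ici a, HasDerivWithinAt V (V' t) (Ici a) t)
    (hV' : ∀ t ∈ Ici a, V' t ≤ -(d + b * f t)) :
    ∀ t ∈ Ici a, V t ≤ V a - (d * (t - a) + b * ∫ x in a..t, f x) := by
  have hW : MonotoneOn (fun t => -(V t + (d * (t - a) + b * ∫ x in a..t, f x))) (Ici a) :=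
    monotoneOn_Ici_of_hasDerivWithinAt_nonneg
      (fun t ht => ((hV t ht).add ((((hasDerivWithinAt_id t _).sub_const a).const_mul d).add
        ((hasDerivWithinAt_integral_Ici hf ht).const_mul b))).neg)
      fun t ht => by linarith [hV' t ht]
  intro t ht
  have := hW self_mem_Ici ht ht
  simp only [sub_self, mul_zero, intervalIntegral.integral_same, zero_add] at this
  linarith

/-- Either `∫ f` stays bounded, or `d t + b ∫ f → ∞` and
`c log f ≤ V ≤ V a - d (t - a) - b ∫ₐᵗ f` drives `log f` to `-∞`. -/
theorem tendsto_zero_of_lyapunov {V V' : ℝ → ℝ} {M c d b : ℝ} (hM : 0 ≤ M) (hc : 0 < c)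
    (hd : 0 ≤ d) (hb : 0 ≤ b) (hdb : 0 < d ∨ 0 < b)
    (hf : ∀ t ∈ Ici a, HasDerivWithinAt f (f' t) (Ici a) t)
    (hf' : ∀ t ∈ Ici a, -M * f t ≤ f' t) (hpos : ∀ t ∈ Ici a, 0 < f t)
    (hV : ∀ t ∈ Ici a, HasDerivWithinAt V (V' t) (Ici a) t)
    (hV' : ∀ t ∈ Ici a, V' t ≤ -(d + b * f t))
    (hVf : ∀ t ∈ Ici a, c * log (f t) ≤ V t) :
    Tendsto f atTop (𝓝 0) := by
  have hfc : ContinuousOn f (Ici a) := fun t ht => (hf t ht).continuousWithinAt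
  set I := fun t => ∫ x in a..t, f x
  have hImono : MonotoneOn I (Ici a) := monotoneOn_Ici_of_hasDerivWithinAt_nonneg
    (fun t ht => hasDerivWithinAt_integral_Ici hfc ht) fun t ht => (hpos t ht).le
  have hlog : ∀ t ∈ Ici a, c * log (f t) ≤ V a - (d * (t - a) + b * I t) := fun t ht =>
    (hVf t ht).trans (le_sub_integral_of_deriv_le hfc hV hV' t ht)
  rcases em (∃ C, ∀ t ∈ Ici a, I t ≤ C) with ⟨C, hC⟩ | hunbdd
  · exact tendsto_zero_of_integral_le hM hf hf' (fun t ht => (hpos t ht).le) hC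
  have hItop : Tendsto I atTop atTop := by
    refine tendsto_atTop.2 fun C => ?_
    push Not at hunbdd
    obtain ⟨t₀, ht₀, hC⟩ := hunbdd C
    filter_upwards [eventually_ge_atTop t₀] with t ht
    exact hC.le.trans (hImono ht₀ (le_trans ht₀ ht) ht)
  have hdrift : Tendsto (fun t => d * (t - a) + b * I t) atTop atTop := by
    have hdt : 0 ≤ᶠ[atTop] fun t => d * (t - a) :=
      (eventually_ge_atTop a).mono fun t ht => mul_nonneg hd (sub_nonneg.2 ht)
    have hbI : 0 ≤ᶠ[atTop] fun t => b * I t :=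
      (eventually_ge_atTop a).mono fun t ht =>
        mul_nonneg hb (by simpa [I] using hImono self_mem_Ici ht ht)
    rcases hdb with hd | hb
    · exact (Tendsto.const_mul_atTop hd
        (tendsto_atTop_add_const_right atTop (-a) tendsto_id)).atTop_add_zero_eventuallyLE hbI
    · exact (hItop.const_mul_atTop hb).zero_eventuallyLE_add_atTop hdt
  have hexp : Tendsto (fun t => exp ((V a - (d * (t - a) + b * I t)) / c)) atTop (𝓝 0) :=
    tendsto_exp_atBot.comp <| (tendsto_atBot_add_const_left _ _
      (tendsto_neg_atTop_atBot.comp hdrift)).atBot_div_const hc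
  refine squeeze_zero' ((eventually_ge_atTop a).mono fun t ht => (hpos t ht).le)
    ((eventually_ge_atTop a).mono fun t ht => ?_) hexp
  rw [← exp_log (hpos t ht), exp_le_exp, le_div_iff₀' hc]
  exact hlog t ht

theorem pos_of_hasDerivWithinAt_mul
    (hf : ∀ t ∈ Ici a, HasDerivWithinAt f (f t * g t) (Ici a) t) (hg : ContinuousOn g (Ici a))
    (ha : 0 < f a) : ∀ t ∈ Ici a, 0 < f t := fun t ht =>
  (mul_pos ha (exp_pos _)).trans_le (mul_exp_integral_le hf hg (fun _ _ => le_rfl) t ht)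

end Comparison

namespace StackedContact

variable {l10 l20 l21 : ℝ}

def rate₁ (l10 l21 p q : ℝ) : ℝ := l10 * (1 - p - q) - 1 - l21 * q

def rate₂ (l20 l21 p q : ℝ) : ℝ := l20 * (1 - p - q) - 1 + l21 * p

theorem meanField_zero (p : ℝ × ℝ) :
    meanField l10 l20 l21 0 p = (p.1 * rate₁ l10 l21 p.1 p.2, p.2 * rate₂ l20 l21 p.1 p.2) := by
  ext <;> simp only [meanField, rate₁, rate₂] <;> ring

theorem rate₂_sub_mul_rate₁ (hl10 : l10 ≠ 0) (p q : ℝ) :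
    rate₂ l20 l21 p q - (l20 - l21) / l10 * rate₁ l10 l21 p q =
      -((1 - (l20 / l10 + l21 * (1 - 1 / l10))) + l21 * (1 - (l20 - l21) / l10) * q) := by
  simp only [rate₁, rate₂]
  field_simp
  ring

theorem rate₂_le_rate₁_add (hl : l20 ≤ l10) {p q : ℝ} (hpq : p + q ≤ 1) :
    rate₂ l20 l21 p q ≤ rate₁ l10 l21 p q + l21 * (p + q) := by
  simp only [rate₁, rate₂]
  nlinarith

variable {P Q : ℝ → ℝ}

theorem add_le_one
    (hP : ∀ t ∈ Ici 0, HasDerivWithinAt P (P t * rate₁ l10 l21 (P t) (Q t)) (Ici 0) t)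
    (hQ : ∀ t ∈ Ici 0, HasDerivWithinAt Q (Q t * rate₂ l20 l21 (P t) (Q t)) (Ici 0) t)
    (hPpos : ∀ t ∈ Ici 0, 0 < P t) (hQpos : ∀ t ∈ Ici 0, 0 < Q t) (h0 : P 0 + Q 0 ≤ 1) :
    ∀ t ∈ Ici 0, P t + Q t ≤ 1 := by
  have hPc : ContinuousOn P (Ici 0) := fun t ht => (hP t ht).continuousWithinAt
  have hQc : ContinuousOn Q (Ici 0) := fun t ht => (hQ t ht).continuousWithinAt
  -- `W = 1 - (P + Q)` obeys `W' = -(l10 P + l20 Q) W + (P + Q)`.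
  have hW := mul_exp_integral_le (f := fun t => 1 - (P t + Q t))
    (g := fun t => -(l10 * P t + l20 * Q t))
    (fun t ht => ((hP t ht).add (hQ t ht)).const_sub 1) (by fun_prop) fun t ht => by
      simp only [rate₁, rate₂]
      nlinarith [hPpos t ht, hQpos t ht]
  intro t ht
  nlinarith [hW t ht, exp_pos (∫ x in (0 : ℝ)..t, -(l10 * P x + l20 * Q x))]

theorem lyapunov_rate_le (hl10 : l10 ≠ 0) (hl20 : l20 ≤ l10) {a₁ a₂ p q : ℝ}
    (ha : a₁ + a₂ = (l20 - l21) / l10) (ha₂ : a₂ ≤ 0) (hp : 0 < p) (hq : 0 < q)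
    (hpq : p + q ≤ 1) :
    rate₂ l20 l21 p q - a₁ * rate₁ l10 l21 p q
        - a₂ * ((p * rate₁ l10 l21 p q + q * rate₂ l20 l21 p q) / (p + q)) ≤
      -((1 - (l20 / l10 + l21 * (1 - 1 / l10))) + l21 * (1 - a₁) * q) := by
  have hid := rate₂_sub_mul_rate₁ (l20 := l20) (l21 := l21) hl10 p q
  rw [← ha] at hid
  have hlogS : (p * rate₁ l10 l21 p q + q * rate₂ l20 l21 p q) / (p + q) ≤
      rate₁ l10 l21 p q + l21 * q := by
    rw [div_le_iff₀ (by linarith)]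
    nlinarith [rate₂_le_rate₁_add (l21 := l21) hl20 hpq]
  linear_combination hid + mul_le_mul_of_nonpos_left hlogS ha₂

theorem pos_or_pos_of_invades (h10 : 1 < l10) (h20 : 0 ≤ l20) (h21 : 0 ≤ l21)
    (hl20 : l20 ≤ l10) (hinv : 1 < l10 / l20 - l21 * (1 - 1 / l20)) :
    0 < 1 - (l20 / l10 + l21 * (1 - 1 / l10)) ∨ 0 < l21 * (1 - max ((l20 - l21) / l10) 0) := by
  have hl10 : 0 < l10 := by linarith
  rcases h21.eq_or_lt with rfl | h21
  · have hl20pos : 0 < l20 := h20.lt_of_ne <| by rintro rfl; norm_num at hinv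
    left
    simp only [zero_mul, add_zero, sub_pos, div_lt_one hl10]
    exact (one_lt_div hl20pos).1 (by linarith)
  · right
    have : (l20 - l21) / l10 < 1 := by rw [div_lt_one hl10]; linarith
    exact mul_pos h21 (by simp only [sub_pos, max_lt_iff]; exact ⟨this, one_pos⟩)

theorem tendsto_snd_zero (h10 : 1 < l10) (h20 : 0 ≤ l20) (h21 : 0 ≤ l21)
    (hfail : l20 / l10 + l21 * (1 - 1 / l10) ≤ 1) (hinv : 1 < l10 / l20 - l21 * (1 - 1 / l20))
    (hP : ∀ t ∈ Ici 0, HasDerivWithinAt P (P t * rate₁ l10 l21 (P t) (Q t)) (Ici 0) t)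
    (hQ : ∀ t ∈ Ici 0, HasDerivWithinAt Q (Q t * rate₂ l20 l21 (P t) (Q t)) (Ici 0) t)
    (hPpos : ∀ t ∈ Ici 0, 0 < P t) (hQpos : ∀ t ∈ Ici 0, 0 < Q t)
    (hS : ∀ t ∈ Ici 0, P t + Q t ≤ 1) :
    Tendsto Q atTop (𝓝 0) := by
  have hl10 : 0 < l10 := by linarith
  have hl20 : l20 ≤ l10 := by
    have : 0 ≤ 1 - 1 / l10 := by rw [sub_nonneg, div_le_one hl10]; linarith
    have : l20 / l10 ≤ 1 := by nlinarith [mul_nonneg h21 this]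
    rwa [div_le_one hl10] at this
  set a := (l20 - l21) / l10
  have ha : max a 0 ≤ 1 := max_le (by rw [div_le_one hl10]; linarith) zero_le_one
  have hmax : 0 ≤ max a 0 := le_max_right a 0
  have hmin : min a 0 ≤ 0 := min_le_right a 0
  have hsum : max a 0 + min a 0 = a := by rw [add_comm, min_add_max, add_zero]
  refine tendsto_zero_of_lyapunov (M := 1) (c := 1 - min a 0)
    (V := fun t => log (Q t) - max a 0 * log (P t) - min a 0 * log (P t + Q t))
    zero_le_one (by linarith) (by linarith) (mul_nonneg h21 (by linarith))
    (pos_or_pos_of_invades h10 h20 h21 hl20 hinv) hQ (fun t ht => ?_) hQpos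
    (fun t ht => ((hQ t ht).log (hQpos t ht).ne')
      |>.sub (((hP t ht).log (hPpos t ht).ne').const_mul _)
      |>.sub ((((hP t ht).add (hQ t ht)).log (add_pos (hPpos t ht) (hQpos t ht)).ne').const_mul _))
    (fun t ht => ?_) (fun t ht => ?_)
  · have := hS t ht
    simp only [rate₂]
    nlinarith [mul_nonneg h20 (sub_nonneg.2 this), mul_nonneg h21 (hPpos t ht).le, hQpos t ht]
  · rw [Pi.add_apply, mul_div_cancel_left₀ _ (hQpos t ht).ne',
      mul_div_cancel_left₀ _ (hPpos t ht).ne']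
    exact lyapunov_rate_le hl10.ne' hl20 hsum hmin (hPpos t ht) (hQpos t ht) (hS t ht)
  · have hP1 : log (P t) ≤ 0 := log_nonpos (hPpos t ht).le (by linarith [hS t ht, hQpos t ht])
    have hQS : log (Q t) ≤ log (P t + Q t) := log_le_log (hQpos t ht) (by linarith [hPpos t ht])
    nlinarith [mul_nonpos_of_nonneg_of_nonpos hmax hP1, mul_le_mul_of_nonpos_left hQS hmin]

/-- `1 / P` solves the linear equation `v' = l10 - (l10 - 1) v + (l10 + l21) Q v`, which
relaxes to `l10 / (l10 - 1)` once `Q` is small. -/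
theorem tendsto_fst_of_tendsto_snd (h10 : 1 < l10) (h21 : 0 ≤ l21)
    (hP : ∀ t ∈ Ici 0, HasDerivWithinAt P (P t * rate₁ l10 l21 (P t) (Q t)) (Ici 0) t)
    (hPpos : ∀ t ∈ Ici 0, 0 < P t) (hQpos : ∀ t ∈ Ici 0, 0 < Q t)
    (hQ : Tendsto Q atTop (𝓝 0)) :
    Tendsto P atTop (𝓝 (1 - 1 / l10)) := by
  have hv : ∀ t ∈ Ici 0, HasDerivWithinAt (fun t => (P t)⁻¹)
      (l10 - (l10 - 1) * (P t)⁻¹ + (l10 + l21) * Q t * (P t)⁻¹) (Ici 0) t := fun t ht =>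
    ((hP t ht).inv (hPpos t ht).ne').congr_deriv <| by
      have := (hPpos t ht).ne'
      simp only [rate₁]
      field_simp
      ring
  have hlim : Tendsto (fun t => (P t)⁻¹) atTop (𝓝 (l10 / (l10 - 1))) := by
    refine tendsto_order.2 ⟨fun b hb => ?_, fun b hb => ?_⟩
    · refine eventually_gt_of_sub_mul_le_deriv (by linarith) hv ?_ hb
      filter_upwards [eventually_ge_atTop 0] with t ht
      nlinarith [mul_nonneg (mul_nonneg (by linarith : (0:ℝ) ≤ l10 + l21) (hQpos t ht).le)
        (inv_pos.2 (hPpos t ht)).le]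
    · have hb0 : 0 < b := lt_trans (div_pos (by linarith) (by linarith)) hb
      have hb' : l10 / b < l10 - 1 := by
        rw [gt_iff_lt, div_lt_iff₀ (by linarith)] at hb
        rw [div_lt_iff₀ hb0]
        linarith
      obtain ⟨κ, hbκ, hκ1⟩ := exists_between hb'
      have hκ : 0 < κ := (div_pos (by linarith) hb0).trans hbκ
      have hη : 0 < (l10 - 1 - κ) / (l10 + l21) := div_pos (by linarith) (by linarith)
      refine eventually_lt_of_deriv_le_sub_mul (A := l10) hκ hv ?_ ?_
      · filter_upwards [hQ.eventually_lt_const hη, eventually_ge_atTop 0] with t hQt ht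
        rw [lt_div_iff₀ (by linarith)] at hQt
        nlinarith [inv_pos.2 (hPpos t ht)]
      · rw [div_lt_iff₀ hκ, ← div_lt_iff₀' hb0]; linarith
  have := hlim.inv₀ (div_pos (by linarith) (by linarith)).ne'
  simp only [inv_inv, inv_div] at this
  convert this using 2
  field_simp

end StackedContact

open StackedContact

theorem IsSolution.hasDerivWithinAt_fst {l10 l20 l21 : ℝ} {u : ℝ → ℝ × ℝ}
    (hu : IsSolution l10 l20 l21 0 u) :
    ∀ t ∈ Ici 0, HasDerivWithinAt (fun t => (u t).1)
      ((u t).1 * rate₁ l10 l21 (u t).1 (u t).2) (Ici 0) t := fun t ht =>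
  ((hasFDerivAt_fst (𝕜 := ℝ)).comp_hasDerivWithinAt t (hu t ht)).congr_deriv
    (by simp [meanField_zero])

theorem IsSolution.hasDerivWithinAt_snd {l10 l20 l21 : ℝ} {u : ℝ → ℝ × ℝ}
    (hu : IsSolution l10 l20 l21 0 u) :
    ∀ t ∈ Ici 0, HasDerivWithinAt (fun t => (u t).2)
      ((u t).2 * rate₂ l20 l21 (u t).1 (u t).2) (Ici 0) t := fun t ht =>
  ((hasFDerivAt_snd (𝕜 := ℝ)).comp_hasDerivWithinAt t (hu t ht)).congr_deriv
    (by simp [meanField_zero])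

theorem ones_win_globally_stable_general
    (l10 l20 l21 δ : ℝ) (h20 : 0 ≤ l20) (h21 : 0 ≤ l21)
    (hδ0 : δ = 0) (h10gt : 1 < l10)
    (h2in1fail : ¬ (l20 / l10 + l21 * (1 - 1 / l10) > 1 + δ))
    (h1in2 : l10 / l20 - l21 * (1 - 1 / l20) > 1) :
    ∀ u : ℝ → ℝ × ℝ, IsSolution l10 l20 l21 δ u → u 0 ∈ lambdaPlus δ →
      Tendsto u atTop (𝓝 ((1 - 1 / l10, 0) : ℝ × ℝ)) := by
  subst hδ0
  rintro u hu ⟨⟨-, -, hS0⟩, hQ0, hP0⟩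
  have hP := hu.hasDerivWithinAt_fst
  have hQ := hu.hasDerivWithinAt_snd
  have hPc : ContinuousOn (fun t => (u t).1) (Ici 0) := fun t ht => (hP t ht).continuousWithinAt
  have hQc : ContinuousOn (fun t => (u t).2) (Ici 0) := fun t ht => (hQ t ht).continuousWithinAt
  have hPpos := pos_of_hasDerivWithinAt_mul hP (by unfold rate₁; fun_prop) (hP0 rfl)
  have hQpos := pos_of_hasDerivWithinAt_mul hQ (by unfold rate₂; fun_prop) hQ0
  have hS := add_le_one hP hQ hPpos hQpos hS0
  have hQlim := tendsto_snd_zero h10gt h20 h21 (by simpa using h2in1fail) h1in2 hP hQ hPpos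
    hQpos hS
  exact (tendsto_fst_of_tendsto_snd h10gt h21 hP hPpos hQpos hQlim).prodMk_nhds hQlim

/-- 1s win: δ = 0, λ10 > 1, (2s invade 1s) fails and (1s invade 2s) holds. -/
theorem ones_win_globally_stable
    (l10 l20 l21 δ : ℝ) (h10 : 0 ≤ l10) (h20 : 0 ≤ l20) (h21 : 0 ≤ l21) (hδ : 0 ≤ δ)
    (hδ0 : δ = 0) (h10gt : 1 < l10)
    (h2in1fail : ¬ (l20 / l10 + l21 * (1 - 1 / l10) > 1 + δ))
    (h1in2 : l10 / l20 - l21 * (1 - 1 / l20) > 1) :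
    ∀ u : ℝ → ℝ × ℝ, IsSolution l10 l20 l21 δ u → u 0 ∈ lambdaPlus δ →
      Tendsto u atTop (𝓝 ((1 - 1 / l10, 0) : ℝ × ℝ)) :=
  ones_win_globally_stable_general l10 l20 l21 δ h20 h21 hδ0 h10gt h2in1fail h1in2
end

section
/- The region Λ is forward invariant for the mean-field system: every solution u : [0,∞) → ℝ² of u' = F(u) with u(0) ∈ Λ satisfies u(t) ∈ Λ for all t ≥ 0. -/
open Filter Topology Set

/-!
Each of `u₂`, `u₁` and `1 - u₁ - u₂` satisfies a linear differential inequality `y' ≥ c(t) y`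
with `c` continuous: `u₂' = c u₂` exactly, `u₁' = c u₁ + δ u₂ ≥ c u₁` once `u₂ ≥ 0` is known,
and `(1 - u₁ - u₂)' = c (1 - u₁ - u₂) + 1`. Such a `y` starting nonnegative stays nonnegative:
if `c ≤ K`, then at a point where `y` touches the negative barrier `B = -ε exp ((K + 1) s)` we
have `y' ≥ K y > (K + 1) y = B'`, so `y` stays above `B`; let `ε → 0`.
-/

theorem nonneg_of_hasDerivWithinAt_ge_mul {y y' c : ℝ → ℝ} {a b : ℝ}
    (hy : ContinuousOn y (Icc a b)) (hy' : ∀ t ∈ Ico a b, HasDerivWithinAt y (y' t) (Ici t) t)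
    (hc : ContinuousOn c (Icc a b)) (hyc : ∀ t ∈ Ico a b, c t * y t ≤ y' t) (ha : 0 ≤ y a) :
    ∀ t ∈ Icc a b, 0 ≤ y t := by
  obtain ⟨K, hK⟩ := isCompact_Icc.bddAbove_image hc
  intro t ht
  refine le_of_forall_pos_le_add fun ε hε => ?_
  set B : ℝ → ℝ := fun s => -ε * Real.exp ((K + 1) * (s - t)) with hB
  have hB_neg : ∀ s, B s < 0 := fun s =>
    mul_neg_of_neg_of_pos (neg_neg_of_pos hε) (Real.exp_pos _)
  have hB' : ∀ s, HasDerivAt B ((K + 1) * B s) s := fun s =>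
    ((((hasDerivAt_id s).sub_const t).const_mul (K + 1)).exp.const_mul (-ε)).congr_deriv
      (by simp only [hB, id]; ring)
  have hBy : B t ≤ y t :=
    image_le_of_deriv_right_lt_deriv_boundary' (fun s _ => (hB' s).continuousAt.continuousWithinAt)
      (fun s _ => (hB' s).hasDerivWithinAt) ((hB_neg a).le.trans ha) hy hy'
      (fun s hs hBs => by
        have hys : y s < 0 := hBs ▸ hB_neg s
        have hcs : c s ≤ K := hK (mem_image_of_mem c (Ico_subset_Icc_self hs))
        calc (K + 1) * B s = (K + 1) * y s := by rw [hBs]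
          _ < K * y s := by linarith
          _ ≤ c s * y s := mul_le_mul_of_nonpos_right hcs hys.le
          _ ≤ y' s := hyc s hs) ht
  have hBt : B t = -ε := by simp [hB]
  linarith

theorem nonneg_of_hasDerivWithinAt_ge_mul_Ici {y y' c : ℝ → ℝ} {a : ℝ}
    (hy' : ∀ t, a ≤ t → HasDerivWithinAt y (y' t) (Ici a) t) (hc : ContinuousOn c (Ici a))
    (hyc : ∀ t, a ≤ t → c t * y t ≤ y' t) (ha : 0 ≤ y a) : ∀ t, a ≤ t → 0 ≤ y t :=
  fun T hT => nonneg_of_hasDerivWithinAt_ge_mul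
    (fun t ht => (hy' t ht.1).continuousWithinAt.mono Icc_subset_Ici_self)
    (fun t ht => (hy' t ht.1).mono (Ici_subset_Ici.mpr ht.1)) (hc.mono Icc_subset_Ici_self)
    (fun t ht => hyc t ht.1) ha T ⟨hT, le_rfl⟩

section meanField

variable (l10 l20 l21 δ : ℝ) (p : ℝ × ℝ)

theorem meanField_fst :
    (meanField l10 l20 l21 δ p).1 = (l10 * (1 - p.1 - p.2) - 1 - l21 * p.2) * p.1 + δ * p.2 := by
  simp only [meanField]; ring

theorem meanField_snd :
    (meanField l10 l20 l21 δ p).2 = (l20 * (1 - p.1 - p.2) - 1 - δ + l21 * p.1) * p.2 := by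
  simp only [meanField]; ring

theorem neg_meanField_fst_sub_snd :
    -(meanField l10 l20 l21 δ p).1 - (meanField l10 l20 l21 δ p).2 =
      (-(l10 * p.1 + l20 * p.2) - 1) * (1 - p.1 - p.2) + 1 := by
  simp only [meanField]; ring

end meanField

namespace IsSolution

variable {l10 l20 l21 δ : ℝ} {u : ℝ → ℝ × ℝ}

theorem hasDerivWithinAt_fst_s6 (hu : IsSolution l10 l20 l21 δ u) {t : ℝ} (ht : 0 ≤ t) :
    HasDerivWithinAt (fun s => (u s).1) (meanField l10 l20 l21 δ (u t)).1 (Ici 0) t :=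
  (ContinuousLinearMap.fst ℝ ℝ ℝ).hasFDerivAt.comp_hasDerivWithinAt t (hu t ht)

theorem hasDerivWithinAt_snd_s6 (hu : IsSolution l10 l20 l21 δ u) {t : ℝ} (ht : 0 ≤ t) :
    HasDerivWithinAt (fun s => (u s).2) (meanField l10 l20 l21 δ (u t)).2 (Ici 0) t :=
  (ContinuousLinearMap.snd ℝ ℝ ℝ).hasFDerivAt.comp_hasDerivWithinAt t (hu t ht)

end IsSolution

theorem lambdaRegion_forward_invariant_general
    (l10 l20 l21 δ : ℝ) (hδ : 0 ≤ δ)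
    (u : ℝ → ℝ × ℝ) (hu : IsSolution l10 l20 l21 δ u)
    (h0 : u 0 ∈ lambdaRegion) :
    ∀ t : ℝ, 0 ≤ t → u t ∈ lambdaRegion := by
  have := hu.continuousOn
  have hu₂ : ∀ t, 0 ≤ t → 0 ≤ (u t).2 :=
    nonneg_of_hasDerivWithinAt_ge_mul_Ici (fun t => hu.hasDerivWithinAt_snd_s6)
      (c := fun t => l20 * (1 - (u t).1 - (u t).2) - 1 - δ + l21 * (u t).1) (by fun_prop)
      (fun t _ => (meanField_snd l10 l20 l21 δ (u t)).ge) h0.2.1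
  have hu₁ : ∀ t, 0 ≤ t → 0 ≤ (u t).1 :=
    nonneg_of_hasDerivWithinAt_ge_mul_Ici (fun t => hu.hasDerivWithinAt_fst_s6)
      (c := fun t => l10 * (1 - (u t).1 - (u t).2) - 1 - l21 * (u t).2) (by fun_prop)
      (fun t ht => by
        rw [meanField_fst]
        linarith [mul_nonneg hδ (hu₂ t ht)]) h0.1
  have hslack : ∀ t, 0 ≤ t → 0 ≤ 1 - (u t).1 - (u t).2 :=
    nonneg_of_hasDerivWithinAt_ge_mul_Ici
      (fun t ht => ((hu.hasDerivWithinAt_fst_s6 ht).const_sub 1).sub (hu.hasDerivWithinAt_snd_s6 ht))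
      (c := fun t => -(l10 * (u t).1 + l20 * (u t).2) - 1) (by fun_prop)
      (fun t _ => by
        rw [neg_meanField_fst_sub_snd]
        linarith) (by linarith [h0.2.2])
  exact fun t ht => ⟨hu₁ t ht, hu₂ t ht, by linarith [hslack t ht]⟩

/-- The region Λ is forward invariant for the mean-field system. -/
theorem lambdaRegion_forward_invariant
    (l10 l20 l21 δ : ℝ) (h10 : 0 ≤ l10) (h20 : 0 ≤ l20) (h21 : 0 ≤ l21) (hδ : 0 ≤ δ)
    (u : ℝ → ℝ × ℝ) (hu : IsSolution l10 l20 l21 δ u)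
    (h0 : u 0 ∈ lambdaRegion) :
    ∀ t : ℝ, 0 ≤ t → u t ∈ lambdaRegion :=
  lambdaRegion_forward_invariant_general l10 l20 l21 δ hδ u hu h0
end

section
/- A point p on the topological boundary of Λ satisfies F(p) = (0,0) if and only if p = (0,0), or λ10 > 1 and p = (1 − 1/λ10, 0), or δ = 0 and λ20 > 1 and p = (0, 1 − 1/λ20). In particular, F1(u1,u2) + F2(u1,u2) < 0 whenever (u1,u2) ∈ Λ and u1 + u2 = 1, so there are no equilibria on the segment Λ ∩ {u1 + u2 = 1}. -/
/-!
On each edge of Λ the field decouples. On `u₂ = 0` only the logistic term `λ₁₀ u(1 - u) - u`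
survives, and on `u₁ = 0` the first component is `δ u₂`, so `δ = 0` or `u₂ = 0` there, after
which the second component is again logistic. On the hypotenuse the infection terms carry the
factor `1 - u₁ - u₂ = 0` and the exchange terms `± δ u₂`, `± λ₂₁ u₁ u₂` cancel in `F₁ + F₂`,
which is therefore `-(u₁ + u₂) = -1`.
-/

open Filter Topology Set

theorem logistic_eq_zero_iff {l u : ℝ} (hu₀ : 0 ≤ u) (hu₁ : u ≤ 1) :
    l * u * (1 - u) - u = 0 ↔ u = 0 ∨ (1 < l ∧ u = 1 - 1 / l) := by
  constructor
  · intro h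
    rcases hu₀.eq_or_lt with rfl | hu
    · exact .inl rfl
    have hl : l * (1 - u) = 1 := by
      have : u * (l * (1 - u) - 1) = 0 := by linarith
      linarith [(mul_eq_zero.mp this).resolve_left hu.ne']
    have hu₁' : 0 < 1 - u := by
      rcases hu₁.lt_or_eq with h | rfl
      · linarith
      · simp at hl
    have hl₁ : 1 < l := by nlinarith
    refine .inr ⟨hl₁, ?_⟩
    field_simp
    linarith
  · rintro (rfl | ⟨hl, rfl⟩)
    · simp
    · field_simp
      ring

section

variable {l10 l20 l21 δ : ℝ}

theorem meanField_fst_add_snd (p : ℝ × ℝ) :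
    (meanField l10 l20 l21 δ p).1 + (meanField l10 l20 l21 δ p).2 =
      (l10 * p.1 + l20 * p.2) * (1 - p.1 - p.2) - (p.1 + p.2) := by
  simp only [meanField]
  ring

theorem meanField_fst_add_snd_of_add_eq_one {p : ℝ × ℝ} (hp : p.1 + p.2 = 1) :
    (meanField l10 l20 l21 δ p).1 + (meanField l10 l20 l21 δ p).2 = -1 := by
  rw [meanField_fst_add_snd, hp, show 1 - p.1 - p.2 = 0 by linarith]
  ring

theorem meanField_ne_zero_of_add_eq_one {p : ℝ × ℝ} (hp : p.1 + p.2 = 1) :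
    meanField l10 l20 l21 δ p ≠ (0, 0) := fun h => by
  have := meanField_fst_add_snd_of_add_eq_one (l10 := l10) (l20 := l20) (l21 := l21) (δ := δ) hp
  rw [h] at this
  norm_num at this

theorem meanField_mk_zero_eq_zero_iff {u : ℝ} (hu₀ : 0 ≤ u) (hu₁ : u ≤ 1) :
    meanField l10 l20 l21 δ (u, 0) = (0, 0) ↔ u = 0 ∨ (1 < l10 ∧ u = 1 - 1 / l10) := by
  simp only [meanField, Prod.mk.injEq, mul_zero, zero_mul, sub_zero, add_zero, and_true]
  exact logistic_eq_zero_iff hu₀ hu₁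

theorem meanField_zero_mk_eq_zero_iff {v : ℝ} (hv₀ : 0 ≤ v) (hv₁ : v ≤ 1) :
    meanField l10 l20 l21 δ (0, v) = (0, 0) ↔ v = 0 ∨ (δ = 0 ∧ 1 < l20 ∧ v = 1 - 1 / l20) := by
  rcases eq_or_ne v 0 with rfl | hv
  · simp [meanField]
  simp only [meanField, Prod.mk.injEq, mul_zero, zero_mul, sub_zero, zero_add, mul_eq_zero,
    or_false, hv, false_or]
  refine and_congr_right fun hδ => ?_
  rw [hδ, zero_mul, sub_zero, add_zero, logistic_eq_zero_iff hv₀ hv₁, or_iff_right hv]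

end

theorem boundary_equilibria_characterization_general
    (l10 l20 l21 δ : ℝ) :
    (∀ p : ℝ × ℝ, p ∈ lambdaRegion → (p.1 = 0 ∨ p.2 = 0 ∨ p.1 + p.2 = 1) →
      (meanField l10 l20 l21 δ p = (0, 0) ↔
        p = ((0 : ℝ), (0 : ℝ)) ∨ (1 < l10 ∧ p = (1 - 1 / l10, 0)) ∨
          (δ = 0 ∧ 1 < l20 ∧ p = (0, 1 - 1 / l20)))) ∧
    (∀ p : ℝ × ℝ, p ∈ lambdaRegion → p.1 + p.2 = 1 →
      (meanField l10 l20 l21 δ p).1 + (meanField l10 l20 l21 δ p).2 < 0) := by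
  refine ⟨?_, fun p _ hp => by rw [meanField_fst_add_snd_of_add_eq_one hp]; norm_num⟩
  rintro ⟨u, v⟩ ⟨hu, hv, huv⟩ (rfl | rfl | hp)
  · rw [meanField_zero_mk_eq_zero_iff hv (by simpa using huv)]
    simp only [Prod.mk.injEq, true_and]
    tauto
  · rw [meanField_mk_zero_eq_zero_iff hu (by simpa using huv)]
    simp only [Prod.mk.injEq, and_true]
    tauto
  · refine iff_of_false (meanField_ne_zero_of_add_eq_one hp) ?_
    simp only at hp
    rintro (h | ⟨hl, h⟩ | ⟨-, hl, h⟩) <;> simp only [Prod.mk.injEq] at h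
    · linarith
    all_goals linarith [one_div_pos.mpr (zero_lt_one.trans hl)]

/-- Characterization of the equilibria on the boundary of Λ, and the fact that
there are no equilibria on the segment Λ ∩ {u₁ + u₂ = 1}. -/
theorem boundary_equilibria_characterization
    (l10 l20 l21 δ : ℝ) (h10 : 0 ≤ l10) (h20 : 0 ≤ l20) (h21 : 0 ≤ l21) (hδ : 0 ≤ δ) :
    (∀ p : ℝ × ℝ, p ∈ lambdaRegion → (p.1 = 0 ∨ p.2 = 0 ∨ p.1 + p.2 = 1) →
      (meanField l10 l20 l21 δ p = (0, 0) ↔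
        p = ((0 : ℝ), (0 : ℝ)) ∨ (1 < l10 ∧ p = (1 - 1 / l10, 0)) ∨
          (δ = 0 ∧ 1 < l20 ∧ p = (0, 1 - 1 / l20)))) ∧
    (∀ p : ℝ × ℝ, p ∈ lambdaRegion → p.1 + p.2 = 1 →
      (meanField l10 l20 l21 δ p).1 + (meanField l10 l20 l21 δ p).2 < 0) :=
  boundary_equilibria_characterization_general l10 l20 l21 δ
end

section
/- Let B(u1,u2) = 1/(u1·u2). For every point (u1,u2) in the interior of Λ (i.e., u1 > 0, u2 > 0, u1 + u2 < 1), the divergence of the vector field B·F at (u1,u2), namely ∂/∂u1 (B·F1) + ∂/∂u2 (B·F2), equals −λ10/u2 − δ/u1² − λ20/u1. In particular, if (λ10, λ20, δ) ≠ (0,0,0), this divergence is strictly negative on the interior of Λ, so B is a Dulac function for the mean-field system there. -/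
/-! Dividing by `u₁ u₂` cancels the factor `u₁` of every term of `F₁` except `δ u₂`, and the factor
`u₂` of every term of `F₂`, so `B F₁` is affine in `u₁` plus `δ / u₁`, and `B F₂` is affine in `u₂`.
The divergence is then read off, and it is negative since each of its three terms is. -/

open Filter Topology Set

section Dulac

variable (l10 l20 l21 δ : ℝ) {u v : ℝ}

theorem one_div_mul_mul_meanField_fst (hu : u ≠ 0) (hv : v ≠ 0) :
    1 / (u * v) * (meanField l10 l20 l21 δ (u, v)).1 =
      (l10 * (1 - u - v) - 1 - l21 * v) / v + δ / u := by
  simp only [meanField]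
  field_simp
  ring

theorem one_div_mul_mul_meanField_snd (hu : u ≠ 0) (hv : v ≠ 0) :
    1 / (u * v) * (meanField l10 l20 l21 δ (u, v)).2 =
      (l20 * (1 - u - v) - 1 - δ + l21 * u) / u := by
  simp only [meanField]
  field_simp

theorem hasDerivAt_one_div_mul_mul_meanField_fst (hu : u ≠ 0) (hv : v ≠ 0) :
    HasDerivAt (fun x : ℝ => 1 / (x * v) * (meanField l10 l20 l21 δ (x, v)).1)
      (-l10 / v - δ / u ^ 2) u := by
  have hsimple : HasDerivAt (fun x : ℝ => (l10 * (1 - x - v) - 1 - l21 * v) / v + δ / x)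
      (-l10 / v - δ / u ^ 2) u := by
    exact ((((hasDerivAt_id u).const_sub 1).sub_const v).const_mul l10 |>.sub_const 1
      |>.sub_const (l21 * v) |>.div_const v).add ((hasDerivAt_inv hu).const_mul δ)
      |>.congr_deriv (by ring)
  refine hsimple.congr_of_eventuallyEq ?_
  filter_upwards [eventually_ne_nhds hu] with x hx
  exact one_div_mul_mul_meanField_fst l10 l20 l21 δ hx hv

theorem hasDerivAt_one_div_mul_mul_meanField_snd (hu : u ≠ 0) (hv : v ≠ 0) :
    HasDerivAt (fun y : ℝ => 1 / (u * y) * (meanField l10 l20 l21 δ (u, y)).2)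
      (-l20 / u) v := by
  have hsimple : HasDerivAt (fun y : ℝ => (l20 * (1 - u - y) - 1 - δ + l21 * u) / u)
      (-l20 / u) v := by
    exact ((hasDerivAt_id v).const_sub (1 - u)).const_mul l20 |>.sub_const 1
      |>.sub_const δ |>.add_const (l21 * u) |>.div_const u
      |>.congr_deriv (by ring)
  refine hsimple.congr_of_eventuallyEq ?_
  filter_upwards [eventually_ne_nhds hv] with y hy
  exact one_div_mul_mul_meanField_snd l10 l20 l21 δ hu hy

end Dulac

theorem div_add_div_sq_add_div_pos {a b c u v : ℝ} (ha : 0 ≤ a) (hb : 0 ≤ b) (hc : 0 ≤ c)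
    (hu : 0 < u) (hv : 0 < v) (habc : (a, b, c) ≠ (0, 0, 0)) :
    0 < a / v + c / u ^ 2 + b / u := by
  have hav : 0 ≤ a / v := by positivity
  have hcu : 0 ≤ c / u ^ 2 := by positivity
  have hbu : 0 ≤ b / u := by positivity
  by_contra! hle
  have ha0 : a = 0 := by
    simpa [hv.ne'] using (div_eq_zero_iff.mp (by linarith : a / v = 0))
  have hb0 : b = 0 := by
    simpa [hu.ne'] using (div_eq_zero_iff.mp (by linarith : b / u = 0))
  have hc0 : c = 0 := by
    simpa [hu.ne'] using (div_eq_zero_iff.mp (by linarith : c / u ^ 2 = 0))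
  exact habc (by rw [ha0, hb0, hc0])

theorem dulac_function_divergence_general
    (l10 l20 l21 δ : ℝ) (h10 : 0 ≤ l10) (h20 : 0 ≤ l20) (hδ : 0 ≤ δ) :
    ∀ p : ℝ × ℝ, 0 < p.1 → 0 < p.2 → p.1 + p.2 < 1 →
      ∃ d1 d2 : ℝ,
        HasDerivAt (fun x : ℝ =>
          (1 / (x * p.2)) * (meanField l10 l20 l21 δ (x, p.2)).1) d1 p.1 ∧
        HasDerivAt (fun y : ℝ =>
          (1 / (p.1 * y)) * (meanField l10 l20 l21 δ (p.1, y)).2) d2 p.2 ∧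
        d1 + d2 = -l10 / p.2 - δ / p.1 ^ 2 - l20 / p.1 ∧
        ((l10, l20, δ) ≠ ((0 : ℝ), (0 : ℝ), (0 : ℝ)) → d1 + d2 < 0) := by
  rintro ⟨u, v⟩ hu hv -
  dsimp only at hu hv ⊢
  refine ⟨-l10 / v - δ / u ^ 2, -l20 / u,
    hasDerivAt_one_div_mul_mul_meanField_fst l10 l20 l21 δ hu.ne' hv.ne',
    hasDerivAt_one_div_mul_mul_meanField_snd l10 l20 l21 δ hu.ne' hv.ne', by ring, fun hne => ?_⟩
  linarith [div_add_div_sq_add_div_pos h10 h20 hδ hu hv hne,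
    (by ring : -l10 / v - δ / u ^ 2 + -l20 / u = -(l10 / v + δ / u ^ 2 + l20 / u))]

/-- B(u₁,u₂) = 1/(u₁u₂) is a Dulac function for the mean-field system on the
interior of Λ: the divergence of B·F equals −λ10/u₂ − δ/u₁² − λ20/u₁, which is
strictly negative when (λ10, λ20, δ) ≠ (0,0,0). -/
theorem dulac_function_divergence
    (l10 l20 l21 δ : ℝ) (h10 : 0 ≤ l10) (h20 : 0 ≤ l20) (h21 : 0 ≤ l21) (hδ : 0 ≤ δ) :
    ∀ p : ℝ × ℝ, 0 < p.1 → 0 < p.2 → p.1 + p.2 < 1 →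
      ∃ d1 d2 : ℝ,
        HasDerivAt (fun x : ℝ =>
          (1 / (x * p.2)) * (meanField l10 l20 l21 δ (x, p.2)).1) d1 p.1 ∧
        HasDerivAt (fun y : ℝ =>
          (1 / (p.1 * y)) * (meanField l10 l20 l21 δ (p.1, y)).2) d2 p.2 ∧
        d1 + d2 = -l10 / p.2 - δ / p.1 ^ 2 - l20 / p.1 ∧
        ((l10, l20, δ) ≠ ((0 : ℝ), (0 : ℝ), (0 : ℝ)) → d1 + d2 < 0) :=
  dulac_function_divergence_general l10 l20 l21 δ h10 h20 hδ
end

section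
/- Suppose δ > 0, λ10 ≤ 1 and λ20 > 1 + δ. Then there is exactly one point (u1,u2) in the interior of Λ (i.e., with u1 > 0, u2 > 0 and u1 + u2 < 1) satisfying F1(u1,u2) = 0 and F2(u1,u2) = 0. -/
open Filter Topology Set

/-!
On the interior of Λ, `F₂ = 0` forces `(u₁, u₂)` onto the line
`λ20 u₂ = (λ20 - 1 - δ) - (λ20 - λ21) u₁`, along which `λ20 F₁` is a quadratic `q(u₁)`.
The line enters Λ at `u₁ = 0`, where `q(0) = λ20 δ u₂ > 0`, and leaves it either through the
axis `u₂ = 0`, where `F₁ = u₁ (λ10 (1 - u₁) - 1) < 0` as `λ10 ≤ 1`, or through the edge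
`u₁ + u₂ = 1`, where `F₁ = -1`. A quadratic that is positive at one end of an interval and
negative at the other has exactly one root inside it.
-/

theorem existsUnique_quadratic_root_Ioo {a b c R : ℝ} (hR : 0 ≤ R) (h0 : 0 < c)
    (hR' : a * R ^ 2 + b * R + c < 0) : ∃! x, x ∈ Ioo 0 R ∧ a * x ^ 2 + b * x + c = 0 := by
  have hcont : Continuous fun x : ℝ => a * x ^ 2 + b * x + c := by fun_prop
  obtain ⟨x, ⟨hx0, hxR⟩, hx⟩ :=
    intermediate_value_Icc' hR hcont.continuousOn ⟨hR'.le, by simpa using h0.le⟩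
  replace hx0 : 0 < x := hx0.lt_of_ne' (by rintro rfl; linarith)
  replace hxR : x < R := hxR.lt_of_ne (by rintro rfl; linarith)
  refine ⟨x, ⟨⟨hx0, hxR⟩, hx⟩, ?_⟩
  rintro y ⟨⟨hy0, hyR⟩, hy⟩
  by_contra hyx
  -- Two roots factor the quadratic as `a (t - x) (t - y)`; `c > 0` forces `a > 0`, so it is
  -- positive at `R`.
  have hsum : a * (x + y) + b = 0 := by
    have : (y - x) * (a * (x + y) + b) = 0 := by linear_combination hy - hx
    exact (mul_eq_zero.1 this).resolve_left (sub_ne_zero.2 hyx)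
  have hprod : c = a * (x * y) := by linear_combination hx - x * hsum
  have ha : 0 < a := by nlinarith [mul_pos hx0 hy0]
  have hqR : a * R ^ 2 + b * R + c = a * ((R - x) * (R - y)) := by
    linear_combination R * hsum + hprod
  linarith [mul_pos ha (mul_pos (sub_pos.2 hxR) (sub_pos.2 hyR))]

theorem exists_Ioo_iff_mul_lt_and_mul_lt {A B C D : ℝ} (hB : 0 < B) (hD : 0 < D)
    (hAC : 0 < A ∨ 0 < C) :
    ∃ R, 0 < R ∧ (A * R = B ∨ C * R = D) ∧
      ∀ x, (0 < x ∧ A * x < B ∧ C * x < D) ↔ x ∈ Ioo 0 R := by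
  rcases lt_or_ge 0 A with hA | hA <;> rcases lt_or_ge 0 C with hC | hC
  · refine ⟨min (B / A) (D / C), lt_min (div_pos hB hA) (div_pos hD hC), ?_, fun x => ?_⟩
    · rcases min_choice (B / A) (D / C) with h | h <;> rw [h] <;> field_simp <;> simp
    · rw [mem_Ioo, lt_min_iff, lt_div_iff₀' hA, lt_div_iff₀' hC]
  · refine ⟨B / A, div_pos hB hA, Or.inl (by field_simp), fun x => ?_⟩
    rw [mem_Ioo, lt_div_iff₀' hA]
    exact ⟨fun ⟨hx, hxB, _⟩ => ⟨hx, hxB⟩, fun ⟨hx, hxB⟩ => ⟨hx, hxB, by nlinarith⟩⟩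
  · refine ⟨D / C, div_pos hD hC, Or.inr (by field_simp), fun x => ?_⟩
    rw [mem_Ioo, lt_div_iff₀' hC]
    exact ⟨fun ⟨hx, _, hxD⟩ => ⟨hx, hxD⟩, fun ⟨hx, hxD⟩ => ⟨hx, by nlinarith, hxD⟩⟩
  · exact absurd hAC (by simp [hA, hC])

theorem existsUnique_graph {α β : Type*} {P : α → Prop} (f : α → β) (h : ∃! x, P x) :
    ∃! p : α × β, P p.1 ∧ p.2 = f p.1 := by
  obtain ⟨x, hx, huniq⟩ := h
  refine ⟨(x, f x), ⟨hx, rfl⟩, ?_⟩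
  rintro ⟨y, z⟩ ⟨hy, hz⟩
  dsimp only at hy hz
  rw [hz, huniq y hy]

section StackedContact

variable (l10 l20 l21 δ : ℝ)

/-- The nullcline `F₂ = 0, u₂ ≠ 0` as a graph over `u₁`. -/
noncomputable def nullcline (x : ℝ) : ℝ := ((l20 - 1 - δ) - (l20 - l21) * x) / l20

/-- `λ20 · F₁` along the nullcline. -/
def nullclineQuadratic (x : ℝ) : ℝ :=
  l21 * (l20 - l21 - l10) * x ^ 2
    + (l10 * (1 + δ) - l20 - δ * (l20 - l21) - l21 * (l20 - 1 - δ)) * x + δ * (l20 - 1 - δ)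

variable {l10 l20 l21 δ}

theorem meanField_snd_eq_mul (p : ℝ × ℝ) :
    (meanField l10 l20 l21 δ p).2 = p.2 * (l20 * (1 - p.1 - p.2) - 1 - δ + l21 * p.1) := by
  simp only [meanField]; ring

theorem mul_meanField_fst_eq_nullclineQuadratic {u v : ℝ}
    (hv : l20 * v = (l20 - 1 - δ) - (l20 - l21) * u) :
    l20 * (meanField l10 l20 l21 δ (u, v)).1 = nullclineQuadratic l10 l20 l21 δ u := by
  simp only [meanField, nullclineQuadratic]
  linear_combination (δ - (l10 + l21) * u) * hv

theorem nullclineQuadratic_neg_of_mul_eq {x : ℝ} (hl20 : 0 < l20) (h10 : 0 ≤ l10)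
    (h10le : l10 ≤ 1) (hx : 0 < x) (hxB : (l20 - l21) * x = l20 - 1 - δ) :
    nullclineQuadratic l10 l20 l21 δ x < 0 := by
  rw [← mul_meanField_fst_eq_nullclineQuadratic (v := 0) (by linarith)]
  have hlt : l10 * (1 - x) < 1 := by
    rcases le_or_gt x 1 with h | h
    · nlinarith [mul_nonneg (sub_nonneg.2 h10le) (sub_nonneg.2 h)]
    · nlinarith [mul_nonneg h10 (sub_nonneg.2 h.le)]
  have hF : (meanField l10 l20 l21 δ (x, 0)).1 = x * (l10 * (1 - x) - 1) := by
    simp only [meanField]; ring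
  rw [hF]
  exact mul_neg_of_pos_of_neg hl20 (mul_neg_of_pos_of_neg hx (by linarith))

theorem nullclineQuadratic_eq_neg_of_mul_eq {x : ℝ} (hxD : l21 * x = 1 + δ) :
    nullclineQuadratic l10 l20 l21 δ x = -l20 := by
  rw [← mul_meanField_fst_eq_nullclineQuadratic (v := 1 - x) (by linear_combination -hxD)]
  simp only [meanField]
  linear_combination -l20 * (1 - x) * hxD

theorem meanField_snd_eq_zero_iff {u v : ℝ} (hv : v ≠ 0) :
    (meanField l10 l20 l21 δ (u, v)).2 = 0 ↔ l20 * v = (l20 - 1 - δ) - (l20 - l21) * u := by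
  rw [meanField_snd_eq_mul, mul_eq_zero, or_iff_right hv]
  constructor <;> intro h <;> linarith

section OnNullcline

variable {u v : ℝ} (hl20 : 0 < l20) (hv : l20 * v = (l20 - 1 - δ) - (l20 - l21) * u)
include hl20 hv

theorem pos_iff_of_mem_nullcline : 0 < v ↔ (l20 - l21) * u < l20 - 1 - δ := by
  rw [← mul_pos_iff_of_pos_left hl20, hv, sub_pos]

theorem add_lt_one_iff_of_mem_nullcline : u + v < 1 ↔ l21 * u < 1 + δ := by
  rw [← mul_lt_mul_iff_right₀ hl20, mul_one]
  constructor <;> intro h <;> linarith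

theorem meanField_fst_eq_zero_iff_of_mem_nullcline :
    (meanField l10 l20 l21 δ (u, v)).1 = 0 ↔ nullclineQuadratic l10 l20 l21 δ u = 0 := by
  rw [← mul_meanField_fst_eq_nullclineQuadratic hv, mul_eq_zero, or_iff_right hl20.ne']

end OnNullcline

theorem eq_nullcline_iff (hl20 : 0 < l20) {u v : ℝ} :
    v = nullcline l20 l21 δ u ↔ l20 * v = (l20 - 1 - δ) - (l20 - l21) * u := by
  rw [nullcline, eq_div_iff hl20.ne', mul_comm]

theorem interiorEquilibrium_iff (hl20 : 0 < l20) (p : ℝ × ℝ) :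
    ((0 < p.1 ∧ 0 < p.2 ∧ p.1 + p.2 < 1) ∧
      (meanField l10 l20 l21 δ p).1 = 0 ∧ (meanField l10 l20 l21 δ p).2 = 0) ↔
    ((0 < p.1 ∧ (l20 - l21) * p.1 < l20 - 1 - δ ∧ l21 * p.1 < 1 + δ) ∧
      nullclineQuadratic l10 l20 l21 δ p.1 = 0) ∧ p.2 = nullcline l20 l21 δ p.1 := by
  obtain ⟨u, v⟩ := p
  dsimp only
  rw [eq_nullcline_iff hl20]
  constructor
  · rintro ⟨⟨hu, hv, hs⟩, h1, h2⟩
    have hline := (meanField_snd_eq_zero_iff hv.ne').1 h2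
    exact ⟨⟨⟨hu, (pos_iff_of_mem_nullcline hl20 hline).1 hv,
      (add_lt_one_iff_of_mem_nullcline hl20 hline).1 hs⟩,
      (meanField_fst_eq_zero_iff_of_mem_nullcline hl20 hline).1 h1⟩, hline⟩
  · rintro ⟨⟨⟨hu, hv, hs⟩, hq⟩, hline⟩
    have hv' := (pos_iff_of_mem_nullcline hl20 hline).2 hv
    exact ⟨⟨hu, hv', (add_lt_one_iff_of_mem_nullcline hl20 hline).2 hs⟩,
      (meanField_fst_eq_zero_iff_of_mem_nullcline hl20 hline).2 hq,
      (meanField_snd_eq_zero_iff hv'.ne').2 hline⟩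

end StackedContact

theorem unique_interior_equilibrium_case_a_general
    (l10 l20 l21 δ : ℝ) (h10 : 0 ≤ l10)
    (hδpos : 0 < δ) (h10le : l10 ≤ 1) (h20gt : 1 + δ < l20) :
    ∃! p : ℝ × ℝ, (0 < p.1 ∧ 0 < p.2 ∧ p.1 + p.2 < 1) ∧
      (meanField l10 l20 l21 δ p).1 = 0 ∧ (meanField l10 l20 l21 δ p).2 = 0 := by
  have hl20 : 0 < l20 := by linarith
  obtain ⟨R, hR, hRexit, hIoo⟩ := exists_Ioo_iff_mul_lt_and_mul_lt (A := l20 - l21) (C := l21)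
    (by linarith : 0 < l20 - 1 - δ) (by linarith : (0 : ℝ) < 1 + δ)
    (by by_contra! h; linarith [h.1, h.2])
  have hqR : nullclineQuadratic l10 l20 l21 δ R < 0 := by
    rcases hRexit with hRB | hRD
    · exact nullclineQuadratic_neg_of_mul_eq hl20 h10 h10le hR hRB
    · rw [nullclineQuadratic_eq_neg_of_mul_eq hRD]; linarith
  simp_rw [interiorEquilibrium_iff hl20, hIoo]
  exact existsUnique_graph _
    (existsUnique_quadratic_root_Ioo hR.le (mul_pos hδpos (by linarith)) hqR)

/-- If δ > 0, λ10 ≤ 1 and λ20 > 1 + δ, there is exactly one interior equilibrium. -/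
theorem unique_interior_equilibrium_case_a
    (l10 l20 l21 δ : ℝ) (h10 : 0 ≤ l10) (h20 : 0 ≤ l20) (h21 : 0 ≤ l21) (hδ : 0 ≤ δ)
    (hδpos : 0 < δ) (h10le : l10 ≤ 1) (h20gt : 1 + δ < l20) :
    ∃! p : ℝ × ℝ, (0 < p.1 ∧ 0 < p.2 ∧ p.1 + p.2 < 1) ∧
      (meanField l10 l20 l21 δ p).1 = 0 ∧ (meanField l10 l20 l21 δ p).2 = 0 :=
  unique_interior_equilibrium_case_a_general l10 l20 l21 δ h10 hδpos h10le h20gt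
end

section
/- Suppose δ > 0, λ10 > 1 and λ20/λ10 + λ21·(1 − 1/λ10) > 1 + δ. Then there is exactly one point (u1,u2) in the interior of Λ (i.e., with u1 > 0, u2 > 0 and u1 + u2 < 1) satisfying F1(u1,u2) = 0 and F2(u1,u2) = 0. -/
open Filter Topology Set

/-!
Off the axis `u2 = 0`, `F2` vanishes exactly on the line `λ20 (1 - u1 - u2) + λ21 u1 = 1 + δ`.
If `λ20 = 0` this line is `u1 = (1 + δ) / λ21`, and `F1` is affine in `u2` with a unique zero.
If `λ20 > 0`, parametrize the line by `u1 = x`: then `λ20 F1` is a quadratic `ψ x`, and the part of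
the line inside the open triangle is an interval `(P, Q)`. At the ends, `ψ = δ λ20 u2 ≥ 0` on
`u1 = 0`, `ψ = λ20 x (λ10 (1 - x) - 1)` on `u2 = 0` and `ψ = -λ20` on `u1 + u2 = 1`. The
hypothesis says that the point `(1 - 1/λ10, 0)` lies on the side `u2 > 0` of the line, which forces
`ψ P ≥ 0 > ψ Q`, and a quadratic with this sign pattern has exactly one root in `(P, Q)`.
-/

theorem quadratic_eq_mul_sub_mul_sub {A B C x₁ x₂ : ℝ} (h₁ : A * x₁ ^ 2 + B * x₁ + C = 0)
    (h₂ : A * x₂ ^ 2 + B * x₂ + C = 0) (hne : x₁ ≠ x₂) (x : ℝ) :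
    A * x ^ 2 + B * x + C = A * ((x - x₁) * (x - x₂)) := by
  have hsum : A * (x₁ + x₂) + B = 0 := by
    have : (x₁ - x₂) * (A * (x₁ + x₂) + B) = 0 := by linear_combination h₁ - h₂
    exact (mul_eq_zero.1 this).resolve_left (sub_ne_zero.2 hne)
  linear_combination h₁ + (x - x₁) * hsum

theorem existsUnique_root_of_quadratic {f : ℝ → ℝ} {A B C P Q : ℝ}
    (hf : ∀ x, f x = A * x ^ 2 + B * x + C) (hPQ : P < Q) (hP : 0 ≤ f P)
    (hP' : f P = 0 → 0 < 2 * A * P + B) (hQ : f Q < 0) :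
    ∃! x, x ∈ Ioo P Q ∧ f x = 0 := by
  obtain ⟨x, hx, hfx⟩ : ∃ x ∈ Ioo P Q, f x = 0 := by
    rcases hP.lt_or_eq with hP | hP
    · have hcont : Continuous f := by
        rw [show f = fun x => A * x ^ 2 + B * x + C from funext hf]; fun_prop
      exact intermediate_value_Ioo' hPQ.le hcont.continuousOn ⟨hQ, hP⟩
    · -- `P` is a simple root with positive slope `D`; the other root lies in `(P, Q)`
      obtain ⟨D, rfl⟩ : ∃ D, D - 2 * A * P = B := ⟨2 * A * P + B, by ring⟩
      have hD : 0 < D := by linarith [hP' hP.symm]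
      have hfac : ∀ x, f x = (x - P) * (A * (x - P) + D) := fun x => by
        rw [hf] at hP ⊢; linear_combination -hP
      have hAQ : A * (Q - P) + D < 0 := by
        rw [hfac] at hQ; exact neg_of_mul_neg_right hQ (sub_pos.2 hPQ).le
      have hA : A < 0 := by nlinarith
      have hAD : A * (D / A) = D := mul_div_cancel₀ D hA.ne
      refine ⟨P - D / A, ⟨?_, ?_⟩, ?_⟩
      · linarith [div_neg_of_pos_of_neg hD hA]
      · have : P - Q < D / A := by rw [lt_div_iff_of_neg hA]; nlinarith
        linarith
      · rw [hfac]; linear_combination (D / A) * hAD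
  refine ⟨x, ⟨hx, hfx⟩, fun y ⟨hy, hfy⟩ => ?_⟩
  by_contra hne
  have hfac : ∀ z, f z = A * ((z - y) * (z - x)) := fun z => by
    rw [hf]; rw [hf] at hfx hfy; exact quadratic_eq_mul_sub_mul_sub hfy hfx hne z
  have hA : A < 0 := by
    rw [hfac] at hQ
    exact neg_of_mul_neg_left hQ (mul_pos (by linarith [hy.2]) (by linarith [hx.2])).le
  have : f P < 0 := by
    rw [hfac]; exact mul_neg_of_neg_of_pos hA (mul_pos_of_neg_of_neg (by linarith [hy.1])
      (by linarith [hx.1]))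
  linarith

theorem exists_pos_sub_mul_and_pos_sub_mul_iff_lt {c₁ c₂ e₁ e₂ : ℝ} (hc₁ : 0 < c₁)
    (hc₂ : 0 < c₂) (he₁ : 0 ≤ e₁) (he₂ : 0 ≤ e₂) (he : 0 < e₁ + e₂) :
    ∃ Q, 0 < Q ∧ (∀ x, 0 < c₁ - e₁ * x ∧ 0 < c₂ - e₂ * x ↔ x < Q) ∧
      (c₁ - e₁ * Q = 0 ∨ c₂ - e₂ * Q = 0) := by
  have hlt : ∀ {c e : ℝ}, 0 < e → ∀ x, 0 < c - e * x ↔ x < c / e := fun he x => by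
    rw [sub_pos, lt_div_iff₀' he]
  have hzero : ∀ {c e : ℝ}, 0 < e → c - e * (c / e) = 0 := fun he => by
    rw [mul_div_cancel₀ _ he.ne', sub_self]
  rcases he₁.eq_or_lt with rfl | he₁
  · refine ⟨c₂ / e₂, div_pos hc₂ (by linarith), fun x => ?_, .inr (hzero (by linarith))⟩
    simp [hc₁, hlt (show 0 < e₂ by linarith)]
  rcases he₂.eq_or_lt with rfl | he₂
  · exact ⟨c₁ / e₁, div_pos hc₁ he₁, fun x => by simp [hc₂, hlt he₁], .inl (hzero he₁)⟩
  refine ⟨min (c₁ / e₁) (c₂ / e₂), lt_min (div_pos hc₁ he₁) (div_pos hc₂ he₂),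
    fun x => by rw [lt_min_iff, hlt he₁, hlt he₂], ?_⟩
  rcases min_choice (c₁ / e₁) (c₂ / e₂) with h | h <;> rw [h]
  exacts [.inl (hzero he₁), .inr (hzero he₂)]

theorem mul_one_sub_sub_one {a : ℝ} (ha : a ≠ 0) (x : ℝ) :
    a * (1 - x) - 1 = a * (1 - 1 / a - x) := by
  field_simp; ring

section Nullcline

variable {l10 l20 l21 δ : ℝ}

def IsInteriorEquilibrium (l10 l20 l21 δ : ℝ) (p : ℝ × ℝ) : Prop :=
  (0 < p.1 ∧ 0 < p.2 ∧ p.1 + p.2 < 1) ∧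
    (meanField l10 l20 l21 δ p).1 = 0 ∧ (meanField l10 l20 l21 δ p).2 = 0

theorem meanField_fst_eq (p : ℝ × ℝ) : (meanField l10 l20 l21 δ p).1 =
    p.1 * (l10 * (1 - p.1) - 1) - p.2 * ((l10 + l21) * p.1 - δ) := by
  simp only [meanField]; ring

theorem meanField_snd_eq (p : ℝ × ℝ) : (meanField l10 l20 l21 δ p).2 =
    p.2 * (l20 * (1 - p.1 - p.2) + l21 * p.1 - (1 + δ)) := by
  simp only [meanField]; ring

/- On the line `λ20 (1 - u1 - u2) + λ21 u1 = 1 + δ` with `u1 = x` one has `λ20 u2 = nullclineU2 x`,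
`λ20 (1 - u1 - u2) = nullclineVacancy x` and `λ20 F1 = nullclinePsi x`. -/
def nullclineU2 (l20 l21 δ x : ℝ) : ℝ := l20 - (1 + δ) - (l20 - l21) * x

def nullclineVacancy (l21 δ x : ℝ) : ℝ := 1 + δ - l21 * x

def nullclinePsi (l10 l20 l21 δ x : ℝ) : ℝ :=
  l10 * x * nullclineVacancy l21 δ x - l20 * x + (δ - l21 * x) * nullclineU2 l20 l21 δ x

def nullclineInterior (l20 l21 δ : ℝ) : Set ℝ :=
  {x | 0 < x ∧ 0 < nullclineU2 l20 l21 δ x ∧ 0 < nullclineVacancy l21 δ x}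

theorem nullclineVacancy_add_nullclineU2 (x : ℝ) :
    nullclineVacancy l21 δ x + nullclineU2 l20 l21 δ x = l20 * (1 - x) := by
  simp only [nullclineVacancy, nullclineU2]; ring

theorem nullclinePsi_eq_quadratic (x : ℝ) : nullclinePsi l10 l20 l21 δ x =
    -(l21 * (l10 + l21 - l20)) * x ^ 2 +
      (l10 * (1 + δ) - l20 + δ * (l21 - l20) - l21 * (l20 - (1 + δ))) * x +
      δ * (l20 - (1 + δ)) := by
  simp only [nullclinePsi, nullclineVacancy, nullclineU2]; ring

theorem nullclinePsi_zero : nullclinePsi l10 l20 l21 δ 0 = δ * nullclineU2 l20 l21 δ 0 := by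
  simp [nullclinePsi]

theorem nullclinePsi_of_nullclineU2_eq_zero {x : ℝ} (h : nullclineU2 l20 l21 δ x = 0) :
    nullclinePsi l10 l20 l21 δ x = l20 * x * (l10 * (1 - x) - 1) := by
  have hS := nullclineVacancy_add_nullclineU2 (l20 := l20) (l21 := l21) (δ := δ) x
  simp only [nullclinePsi, h] at hS ⊢
  linear_combination l10 * x * hS

theorem nullclinePsi_of_nullclineVacancy_eq_zero {x : ℝ} (h : nullclineVacancy l21 δ x = 0) :
    nullclinePsi l10 l20 l21 δ x = -l20 := by
  simp only [nullclinePsi, nullclineVacancy, nullclineU2] at h ⊢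
  linear_combination (l10 * x + l20 * (1 - x) - δ + l21 * x) * h

theorem meanField_fst_of_mul_snd_eq_nullclineU2 {p : ℝ × ℝ}
    (h : l20 * p.2 = nullclineU2 l20 l21 δ p.1) :
    l20 * (meanField l10 l20 l21 δ p).1 = nullclinePsi l10 l20 l21 δ p.1 := by
  simp only [meanField, nullclinePsi, nullclineVacancy, nullclineU2] at h ⊢
  linear_combination (δ - l21 * p.1 - l10 * p.1) * h

theorem isInteriorEquilibrium_iff (h20 : 0 < l20) {p : ℝ × ℝ} :
    IsInteriorEquilibrium l10 l20 l21 δ p ↔ p.1 ∈ nullclineInterior l20 l21 δ ∧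
      nullclinePsi l10 l20 l21 δ p.1 = 0 ∧ l20 * p.2 = nullclineU2 l20 l21 δ p.1 := by
  have hS := nullclineVacancy_add_nullclineU2 (l20 := l20) (l21 := l21) (δ := δ) p.1
  constructor
  · rintro ⟨⟨h1, h2, h12⟩, hF1, hF2⟩
    rw [meanField_snd_eq] at hF2
    have hline : l20 * p.2 = nullclineU2 l20 l21 δ p.1 := by
      have := (mul_eq_zero.1 hF2).resolve_left h2.ne'
      simp only [nullclineU2]; linarith
    refine ⟨⟨h1, hline ▸ mul_pos h20 h2, ?_⟩, ?_, hline⟩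
    · nlinarith
    · rw [← meanField_fst_of_mul_snd_eq_nullclineU2 hline, hF1, mul_zero]
  · rintro ⟨⟨h1, hU, hS'⟩, hψ, hline⟩
    have h2 : 0 < p.2 := pos_of_mul_pos_right (hline ▸ hU) h20.le
    refine ⟨⟨h1, h2, ?_⟩, ?_, ?_⟩
    · nlinarith
    · have := meanField_fst_of_mul_snd_eq_nullclineU2 (l10 := l10) hline
      rw [hψ] at this
      exact (mul_eq_zero.1 this).resolve_left h20.ne'
    · rw [meanField_snd_eq]
      simp only [nullclineVacancy, nullclineU2] at hS hline ⊢
      linear_combination p.2 * (hS - hline)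

theorem nullclineInterior_eq_Ioo_of_lt (h20 : 0 < l20) (hb : l20 < l21) (hδ : 0 < δ)
    (h10 : 1 < l10) (hE : 0 < nullclineU2 l20 l21 δ (1 - 1 / l10)) :
    ∃ P Q, P < Q ∧ nullclineInterior l20 l21 δ = Ioo P Q ∧
      nullclinePsi l10 l20 l21 δ Q < 0 ∧ 0 ≤ nullclinePsi l10 l20 l21 δ P ∧
      (nullclinePsi l10 l20 l21 δ P = 0 → P = 0 ∧ l20 = 1 + δ) := by
  have hl21 : 0 < l21 := h20.trans hb
  set xU := (1 + δ - l20) / (l21 - l20)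
  set Q := (1 + δ) / l21
  have hU : ∀ x, nullclineU2 l20 l21 δ x = (l21 - l20) * (x - xU) := fun x => by
    simp only [nullclineU2, xU]; field_simp [(sub_pos.2 hb).ne']; ring
  have hS : ∀ x, nullclineVacancy l21 δ x = l21 * (Q - x) := fun x => by
    simp only [nullclineVacancy, Q]; field_simp
  have hxUE : xU < 1 - 1 / l10 := by
    rw [hU] at hE; linarith [(mul_pos_iff_of_pos_left (sub_pos.2 hb)).1 hE]
  have hQ : xU < Q := by
    have hxE : 1 - 1 / l10 < 1 := sub_lt_self _ (by positivity)
    simp only [nullclineU2] at hE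
    have : 1 + δ < l21 := by nlinarith [mul_pos (sub_pos.2 hb) (sub_pos.2 hxE)]
    rw [div_lt_div_iff₀ (sub_pos.2 hb) hl21]; nlinarith
  refine ⟨max 0 xU, Q, max_lt (div_pos (by linarith) hl21) hQ, ?_, ?_, ?_⟩
  · ext x
    simp only [nullclineInterior, mem_ofPred_eq, mem_Ioo, max_lt_iff, hU, hS,
      mul_pos_iff_of_pos_left (sub_pos.2 hb), mul_pos_iff_of_pos_left hl21, sub_pos]
    tauto
  · rw [nullclinePsi_of_nullclineVacancy_eq_zero (by rw [hS, sub_self, mul_zero])]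
    linarith
  have hU0 : nullclineU2 l20 l21 δ 0 = l20 - (1 + δ) := by simp [nullclineU2]
  rcases le_total xU 0 with h | h
  · rw [max_eq_left h, nullclinePsi_zero]
    have : 0 ≤ nullclineU2 l20 l21 δ 0 := by
      rw [hU]; exact mul_nonneg (sub_pos.2 hb).le (by linarith)
    refine ⟨mul_nonneg hδ.le this, fun h0 => ⟨rfl, ?_⟩⟩
    linarith [(mul_eq_zero.1 h0).resolve_left hδ.ne']
  · have hl10 : 0 < l10 * (1 - xU) - 1 := by
      rw [mul_one_sub_sub_one (by positivity)]; exact mul_pos (by positivity) (by linarith)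
    rw [max_eq_right h, nullclinePsi_of_nullclineU2_eq_zero (by rw [hU, sub_self, mul_zero])]
    refine ⟨by positivity, fun h0 => ?_⟩
    have hxU : xU = 0 := by simpa [h20.ne', hl10.ne'] using h0
    refine ⟨hxU, ?_⟩
    have := hU 0
    rw [hxU, hU0] at this
    linarith

theorem nullclineInterior_eq_Ioo_of_le (h20 : 0 < l20) (h21 : 0 ≤ l21) (hb : l21 ≤ l20)
    (hδ : 0 < δ) (h10 : 1 < l10) (hE : 0 < nullclineU2 l20 l21 δ (1 - 1 / l10)) :
    ∃ P Q, P < Q ∧ nullclineInterior l20 l21 δ = Ioo P Q ∧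
      nullclinePsi l10 l20 l21 δ Q < 0 ∧ 0 ≤ nullclinePsi l10 l20 l21 δ P ∧
      (nullclinePsi l10 l20 l21 δ P = 0 → P = 0 ∧ l20 = 1 + δ) := by
  have hxE : 0 < 1 - 1 / l10 := sub_pos.2 ((div_lt_one (zero_lt_one.trans h10)).2 h10)
  have ha : 0 < l20 - (1 + δ) := by
    simp only [nullclineU2] at hE; nlinarith [mul_nonneg (sub_nonneg.2 hb) hxE.le]
  obtain ⟨Q, hQ, hIff, hactive⟩ := exists_pos_sub_mul_and_pos_sub_mul_iff_lt
    (by linarith : 0 < 1 + δ) ha h21 (sub_nonneg.2 hb) (by linarith)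
  have hψ0 : 0 < nullclinePsi l10 l20 l21 δ 0 := by
    rw [nullclinePsi_zero]; exact mul_pos hδ (by simpa [nullclineU2] using ha)
  refine ⟨0, Q, hQ, ?_, ?_, hψ0.le, fun h => absurd h hψ0.ne'⟩
  · ext x
    exact ⟨fun ⟨h1, hU, hS⟩ => ⟨h1, (hIff x).1 ⟨hS, hU⟩⟩,
      fun ⟨h1, h2⟩ => ⟨h1, ((hIff x).2 h2).2, ((hIff x).2 h2).1⟩⟩
  rcases hactive with hS | hU
  · rw [nullclinePsi_of_nullclineVacancy_eq_zero hS]; linarith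
  · rw [nullclinePsi_of_nullclineU2_eq_zero hU]
    have hEQ : 1 - 1 / l10 < Q := by
      simp only [nullclineU2] at hE hU
      nlinarith [mul_nonneg (sub_nonneg.2 hb) hQ.le]
    rw [mul_one_sub_sub_one (by positivity)]
    exact mul_neg_of_pos_of_neg (mul_pos h20 hQ) (mul_neg_of_pos_of_neg (by positivity) (by linarith))

theorem existsUnique_isInteriorEquilibrium_of_pos (h20 : 0 < l20) (h21 : 0 ≤ l21) (hδ : 0 < δ)
    (h10 : 1 < l10) (hE : 0 < nullclineU2 l20 l21 δ (1 - 1 / l10)) :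
    ∃! p, IsInteriorEquilibrium l10 l20 l21 δ p := by
  obtain ⟨P, Q, hPQ, hI, hQ, hP, hcorner⟩ := (lt_or_ge l20 l21).elim
    (nullclineInterior_eq_Ioo_of_lt h20 · hδ h10 hE)
    (nullclineInterior_eq_Ioo_of_le h20 h21 · hδ h10 hE)
  have hxE : 0 < 1 - 1 / l10 := sub_pos.2 ((div_lt_one (zero_lt_one.trans h10)).2 h10)
  -- in the degenerate case the line passes through the trivial equilibrium `0`,
  -- which is then a simple root of `ψ`
  obtain ⟨x, ⟨hx, hψx⟩, huniq⟩ := existsUnique_root_of_quadratic nullclinePsi_eq_quadratic hPQ hP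
    (fun h => by
      obtain ⟨rfl, rfl⟩ := hcorner h
      simp only [nullclineU2] at hE
      have hl21 : 1 + δ < l21 := by nlinarith
      nlinarith [mul_pos hδ (sub_pos.2 hl21)]) hQ
  refine ⟨(x, nullclineU2 l20 l21 δ x / l20), (isInteriorEquilibrium_iff h20).2
    ⟨hI ▸ hx, hψx, mul_div_cancel₀ _ h20.ne'⟩, fun p hp => ?_⟩
  obtain ⟨hp1, hψp, hline⟩ := (isInteriorEquilibrium_iff h20).1 hp
  obtain rfl : p.1 = x := huniq _ ⟨hI ▸ hp1, hψp⟩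
  exact Prod.ext rfl (eq_div_of_mul_eq h20.ne' (by rw [mul_comm, hline]))

theorem existsUnique_isInteriorEquilibrium_of_l20_eq_zero (hδ : 0 ≤ δ) (h10 : 1 < l10)
    (hE : 0 < nullclineU2 0 l21 δ (1 - 1 / l10)) :
    ∃! p, IsInteriorEquilibrium l10 0 l21 δ p := by
  have hxE : 0 < 1 - 1 / l10 := sub_pos.2 ((div_lt_one (zero_lt_one.trans h10)).2 h10)
  simp only [nullclineU2] at hE
  have hl21 : 0 < l21 := by nlinarith
  set x := (1 + δ) / l21
  have hx : l21 * x = 1 + δ := mul_div_cancel₀ _ hl21.ne'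
  have hxpos : 0 < x := div_pos (by linarith) hl21
  have hxE' : x < 1 - 1 / l10 := (mul_lt_mul_iff_right₀ hl21).1 (by linarith)
  have hD : 0 < l10 * x + 1 := by positivity
  set u := x * (l10 * (1 - x) - 1) / (l10 * x + 1)
  have hu : u * (l10 * x + 1) = x * (l10 * (1 - x) - 1) := div_mul_cancel₀ _ hD.ne'
  have hF1 : ∀ v, (meanField l10 0 l21 δ (x, v)).1 =
      x * (l10 * (1 - x) - 1) - v * (l10 * x + 1) := fun v => by
    rw [meanField_fst_eq]; linear_combination (-v) * hx
  refine ⟨(x, u), ⟨⟨hxpos, div_pos (mul_pos hxpos ?_) hD, ?_⟩, ?_, ?_⟩, ?_⟩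
  · rw [mul_one_sub_sub_one (by positivity)]; exact mul_pos (by positivity) (by linarith)
  · have : (x + u) * (l10 * x + 1) = l10 * x := by linear_combination hu
    nlinarith
  · rw [hF1]; linarith
  · rw [meanField_snd_eq]; linear_combination u * hx
  · rintro ⟨y, v⟩ ⟨⟨-, hv, -⟩, hF1', hF2'⟩
    rw [meanField_snd_eq] at hF2'
    obtain rfl : y = x := by
      rw [eq_div_iff hl21.ne']
      linarith [(mul_eq_zero.1 hF2').resolve_left hv.ne']
    rw [hF1] at hF1'
    exact Prod.ext rfl (mul_right_cancel₀ hD.ne' (by linarith))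

end Nullcline

theorem unique_interior_equilibrium_case_b_general
    (l10 l20 l21 δ : ℝ) (h20 : 0 ≤ l20) (h21 : 0 ≤ l21)
    (hδpos : 0 < δ) (h10gt : 1 < l10)
    (h2in1 : l20 / l10 + l21 * (1 - 1 / l10) > 1 + δ) :
    ∃! p : ℝ × ℝ, (0 < p.1 ∧ 0 < p.2 ∧ p.1 + p.2 < 1) ∧
      (meanField l10 l20 l21 δ p).1 = 0 ∧ (meanField l10 l20 l21 δ p).2 = 0 := by
  have hE : 0 < nullclineU2 l20 l21 δ (1 - 1 / l10) := by
    have : nullclineU2 l20 l21 δ (1 - 1 / l10) = l20 / l10 + l21 * (1 - 1 / l10) - (1 + δ) := by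
      simp only [nullclineU2]; field_simp; ring
    linarith
  rcases h20.eq_or_lt with rfl | h20
  · exact existsUnique_isInteriorEquilibrium_of_l20_eq_zero hδpos.le h10gt hE
  · exact existsUnique_isInteriorEquilibrium_of_pos h20 h21 hδpos h10gt hE

/-- If δ > 0, λ10 > 1 and the (2s invade 1s) inequality holds, there is exactly
one interior equilibrium. -/
theorem unique_interior_equilibrium_case_b
    (l10 l20 l21 δ : ℝ) (h10 : 0 ≤ l10) (h20 : 0 ≤ l20) (h21 : 0 ≤ l21) (hδ : 0 ≤ δ)
    (hδpos : 0 < δ) (h10gt : 1 < l10)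
    (h2in1 : l20 / l10 + l21 * (1 - 1 / l10) > 1 + δ) :
    ∃! p : ℝ × ℝ, (0 < p.1 ∧ 0 < p.2 ∧ p.1 + p.2 < 1) ∧
      (meanField l10 l20 l21 δ p).1 = 0 ∧ (meanField l10 l20 l21 δ p).2 = 0 :=
  unique_interior_equilibrium_case_b_general l10 l20 l21 δ h20 h21 hδpos h10gt h2in1
end

section
/- Let N ≥ 1 be an integer and let ξ : ℤ² → {0,1,2} be a configuration with card S_{e1}(ξ) = K1 and K1 ≤ N. Then any connected component of B_{e1} \ S_{e1}(ξ) of maximal cardinality (with respect to nearest-neighbor adjacency) has cardinality at least (2N)² − K1², which is at least 3N². -/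
/-!
Since `S_{e₁}` has `K₁ ≤ N < 2N` points, some column and some row of `B_{e₁}` avoid it. Every
point of the box whose column or row avoids `S_{e₁}` is joined to their crossing by an L-shaped
path in `B_{e₁} \ S_{e₁}`, so all these points lie in one component. The remaining points have
both coordinates among the at most `K₁` columns and `K₁` rows met by `S_{e₁}`, so there are at
most `K₁²` of them.
-/

open Set

/-- Nearest-neighbor adjacency on ℤ². -/
def adjZ2 (x y : ℤ × ℤ) : Prop := |x.1 - y.1| + |x.2 - y.2| = 1

/-- The box B_z = 2Nz + {−N, …, N−1}². -/
def box (N : ℕ) (z : ℤ × ℤ) : Set (ℤ × ℤ) :=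
  {x | 2 * (N : ℤ) * z.1 - N ≤ x.1 ∧ x.1 ≤ 2 * (N : ℤ) * z.1 + N - 1 ∧
       2 * (N : ℤ) * z.2 - N ≤ x.2 ∧ x.2 ≤ 2 * (N : ℤ) * z.2 + N - 1}

/-- `y` is reachable from `x` by a path of adjacent points lying in `A`. -/
def reachIn (A : Set (ℤ × ℤ)) (x y : ℤ × ℤ) : Prop :=
  x ∈ A ∧ Relation.ReflTransGen (fun a b => a ∈ A ∧ b ∈ A ∧ adjZ2 a b) x y

/-- `C` is a connected component of `A` (a maximal connected subset of `A`),
i.e. the set of points of `A` reachable within `A` from some point of `A`. -/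
def IsComponent (A C : Set (ℤ × ℤ)) : Prop :=
  ∃ x ∈ A, C = {y | reachIn A x y}

def freeLines {α β : Type*} [DecidableEq α] [DecidableEq β]
    (I : Finset α) (J : Finset β) (S : Finset (α × β)) : Finset (α × β) :=
  (I ×ˢ J).filter fun p => p.1 ∉ S.image Prod.fst ∨ p.2 ∉ S.image Prod.snd

open Finset in
lemma card_product_sub_sq_le_card_freeLines {α β : Type*} [DecidableEq α] [DecidableEq β]
    (I : Finset α) (J : Finset β) (S : Finset (α × β)) :
    #I * #J - #S ^ 2 ≤ #(freeLines I J S) := by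
  have hblocked : (I ×ˢ J).filter (fun p => ¬(p.1 ∉ S.image Prod.fst ∨ p.2 ∉ S.image Prod.snd))
      ⊆ S.image Prod.fst ×ˢ S.image Prod.snd := by
    intro p hp
    simp only [mem_filter, not_or, not_not] at hp
    exact mem_product.2 hp.2
  have hsplit := card_filter_add_card_filter_not (s := I ×ˢ J)
    (fun p => p.1 ∉ S.image Prod.fst ∨ p.2 ∉ S.image Prod.snd)
  have hblocked_card : #(S.image Prod.fst ×ˢ S.image Prod.snd) ≤ #S ^ 2 := by
    rw [card_product, sq]
    exact Nat.mul_le_mul card_image_le card_image_le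
  have hblocked_le := Finset.card_le_card hblocked
  rw [card_product] at hsplit
  unfold freeLines
  omega

def stepIn (A : Set (ℤ × ℤ)) (a b : ℤ × ℤ) : Prop := a ∈ A ∧ b ∈ A ∧ adjZ2 a b

lemma adjZ2_comm {x y : ℤ × ℤ} : adjZ2 x y ↔ adjZ2 y x := by
  simp only [adjZ2, abs_sub_comm]

lemma mem_of_reachIn {A : Set (ℤ × ℤ)} {x y : ℤ × ℤ} (h : reachIn A x y) : y ∈ A := by
  obtain ⟨hx, hxy⟩ := h
  induction hxy with
  | refl => exact hx
  | tail _ hstep _ => exact hstep.2.1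

lemma reflTransGen_stepIn_of_line {A : Set (ℤ × ℤ)} (f : ℤ → ℤ × ℤ)
    (hf : ∀ t, adjZ2 (f t) (f (t + 1))) {a a' : ℤ} (hA : ∀ t ∈ Set.uIcc a a', f t ∈ A) :
    Relation.ReflTransGen (stepIn A) (f a) (f a') := by
  have hmem : ∀ t, (a ≤ t ∧ t ≤ a' ∨ a' ≤ t ∧ t ≤ a) → f t ∈ A :=
    fun t ht => hA t (Set.mem_uIcc.2 ht)
  refine Relation.ReflTransGen.lift f (fun _ _ h => h) _ _ (reflTransGen_of_succ _ ?_ ?_)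
  · intro i hi
    rw [Order.succ_eq_add_one]
    obtain ⟨hai, hia⟩ := hi
    exact ⟨hmem i (by omega), hmem (i + 1) (by omega), hf i⟩
  · intro i hi
    rw [Order.succ_eq_add_one]
    obtain ⟨hai, hia⟩ := hi
    exact ⟨hmem (i + 1) (by omega), hmem i (by omega), adjZ2_comm.1 (hf i)⟩

lemma reflTransGen_stepIn_of_row {A : Set (ℤ × ℤ)} {a a' b : ℤ}
    (hA : ∀ t ∈ Set.uIcc a a', (t, b) ∈ A) :
    Relation.ReflTransGen (stepIn A) (a, b) (a', b) :=
  reflTransGen_stepIn_of_line (fun t => (t, b)) (fun t => by simp [adjZ2]) hA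

lemma reflTransGen_stepIn_of_column {A : Set (ℤ × ℤ)} {a b b' : ℤ}
    (hA : ∀ t ∈ Set.uIcc b b', (a, t) ∈ A) :
    Relation.ReflTransGen (stepIn A) (a, b) (a, b') :=
  reflTransGen_stepIn_of_line (fun t => (a, t)) (fun t => by simp [adjZ2]) hA

lemma reflTransGen_stepIn_of_free_lines {A : Set (ℤ × ℤ)} {a₁ a₂ b₁ b₂ a₀ b₀ : ℤ}
    (ha₀ : a₀ ∈ Set.Icc a₁ a₂) (hb₀ : b₀ ∈ Set.Icc b₁ b₂)
    (hrow₀ : ∀ t ∈ Set.Icc a₁ a₂, (t, b₀) ∈ A) (hcol₀ : ∀ t ∈ Set.Icc b₁ b₂, (a₀, t) ∈ A)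
    {p : ℤ × ℤ} (hp : p ∈ Set.Icc a₁ a₂ ×ˢ Set.Icc b₁ b₂)
    (hfree : (∀ t ∈ Set.Icc b₁ b₂, (p.1, t) ∈ A) ∨ (∀ t ∈ Set.Icc a₁ a₂, (t, p.2) ∈ A)) :
    Relation.ReflTransGen (stepIn A) (a₀, b₀) p := by
  obtain ⟨hp₁, hp₂⟩ := hp
  rcases hfree with hcol | hrow
  · exact (reflTransGen_stepIn_of_row fun t ht => hrow₀ t (Set.uIcc_subset_Icc ha₀ hp₁ ht)).trans
      (reflTransGen_stepIn_of_column fun t ht => hcol t (Set.uIcc_subset_Icc hb₀ hp₂ ht))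
  · exact (reflTransGen_stepIn_of_column fun t ht => hcol₀ t (Set.uIcc_subset_Icc hb₀ hp₂ ht)).trans
      (reflTransGen_stepIn_of_row fun t ht => hrow t (Set.uIcc_subset_Icc ha₀ hp₁ ht))

open Finset in
lemma exists_isComponent_card_product_sub_sq_le (a₁ a₂ b₁ b₂ : ℤ) (S : Finset (ℤ × ℤ))
    (hSa : #S < #(Finset.Icc a₁ a₂)) (hSb : #S < #(Finset.Icc b₁ b₂)) :
    ∃ C, IsComponent (↑(Finset.Icc a₁ a₂ ×ˢ Finset.Icc b₁ b₂) \ ↑S) C ∧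
      #(Finset.Icc a₁ a₂) * #(Finset.Icc b₁ b₂) - #S ^ 2 ≤ C.ncard := by
  set I := Finset.Icc a₁ a₂
  set J := Finset.Icc b₁ b₂
  set A : Set (ℤ × ℤ) := ↑(I ×ˢ J) \ ↑S
  have hcol : ∀ a ∈ I, a ∉ S.image Prod.fst → ∀ t ∈ Set.Icc b₁ b₂, (a, t) ∈ A :=
    fun a ha haS t ht => ⟨mem_product.2 ⟨ha, mem_Icc.2 ht⟩,
      fun hS => haS (mem_image_of_mem Prod.fst hS)⟩
  have hrow : ∀ b ∈ J, b ∉ S.image Prod.snd → ∀ t ∈ Set.Icc a₁ a₂, (t, b) ∈ A :=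
    fun b hb hbS t ht => ⟨mem_product.2 ⟨mem_Icc.2 ht, hb⟩,
      fun hS => hbS (mem_image_of_mem Prod.snd hS)⟩
  obtain ⟨a₀, ha₀, ha₀S⟩ := exists_mem_notMem_of_card_lt_card (card_image_le.trans_lt hSa)
  obtain ⟨b₀, hb₀, hb₀S⟩ := exists_mem_notMem_of_card_lt_card (card_image_le.trans_lt hSb)
  set C : Set (ℤ × ℤ) := {y | reachIn A (a₀, b₀) y}
  have hstart : (a₀, b₀) ∈ A := hcol a₀ ha₀ ha₀S b₀ (mem_Icc.1 hb₀)
  have hfree_sub : ↑(freeLines I J S) ⊆ C := by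
    intro p hp
    obtain ⟨hpIJ, hfree⟩ := mem_filter.1 (mem_coe.1 hp)
    obtain ⟨hp₁, hp₂⟩ := mem_product.1 hpIJ
    refine ⟨hstart, reflTransGen_stepIn_of_free_lines (mem_Icc.1 ha₀) (mem_Icc.1 hb₀)
      (hrow b₀ hb₀ hb₀S) (hcol a₀ ha₀ ha₀S) ⟨mem_Icc.1 hp₁, mem_Icc.1 hp₂⟩ ?_⟩
    exact hfree.imp (hcol p.1 hp₁) (hrow p.2 hp₂)
  have hC_finite : C.Finite :=
    (I ×ˢ J).finite_toSet.subset fun y hy => (mem_of_reachIn hy).1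
  refine ⟨C, ⟨(a₀, b₀), hstart, rfl⟩, ?_⟩
  calc #I * #J - #S ^ 2 ≤ #(freeLines I J S) := card_product_sub_sq_le_card_freeLines I J S
    _ = (↑(freeLines I J S) : Set (ℤ × ℤ)).ncard := (Set.ncard_coe_finset _).symm
    _ ≤ C.ncard := Set.ncard_le_ncard hfree_sub hC_finite

theorem largest_component_card_lower_bound_general
    (N : ℕ) (hN : 1 ≤ N) (ξ : ℤ × ℤ → Fin 3) (K1 : ℕ)
    (hK1 : ({x ∈ box N (1, 0) | ξ x = 2}).ncard = K1) (hK1N : K1 ≤ N)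
    (C : Set (ℤ × ℤ))
    (hCmax : ∀ C', IsComponent (box N (1, 0) \ {x | ξ x = 2}) C' → C'.ncard ≤ C.ncard) :
    (2 * N) ^ 2 - K1 ^ 2 ≤ C.ncard ∧ 3 * N ^ 2 ≤ (2 * N) ^ 2 - K1 ^ 2 := by
  have hI : (Finset.Icc (N : ℤ) (3 * N - 1)).card = 2 * N := by rw [Int.card_Icc]; omega
  have hJ : (Finset.Icc (-(N : ℤ)) (N - 1)).card = 2 * N := by rw [Int.card_Icc]; omega
  have hbox : box N (1, 0) =
      ↑(Finset.Icc (N : ℤ) (3 * N - 1) ×ˢ Finset.Icc (-(N : ℤ)) (N - 1)) := by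
    ext x
    simp only [box, Set.mem_ofPred_eq, Finset.coe_product, Finset.coe_Icc, Set.mem_prod,
      Set.mem_Icc]
    omega
  set S := (Finset.Icc (N : ℤ) (3 * N - 1) ×ˢ Finset.Icc (-(N : ℤ)) (N - 1)).filter (ξ · = 2)
  have hS : S.card = K1 := by
    rw [← hK1, hbox, ← Set.ncard_coe_finset, Finset.coe_filter]
    rfl
  have hA : box N (1, 0) \ {x | ξ x = 2} = ↑(Finset.Icc (N : ℤ) (3 * N - 1) ×ˢ
      Finset.Icc (-(N : ℤ)) (N - 1)) \ ↑S := by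
    ext x
    simp only [hbox, S, Finset.coe_filter, Set.mem_sdiff, Set.mem_ofPred_eq]
    tauto
  obtain ⟨C', hC', hC'card⟩ :=
    exists_isComponent_card_product_sub_sq_le (N : ℤ) (3 * N - 1) (-(N : ℤ)) (N - 1) S
      (by rw [hI]; omega) (by rw [hJ]; omega)
  rw [← hA] at hC'
  rw [hI, hJ, hS] at hC'card
  have hK1sq : K1 ^ 2 ≤ N ^ 2 := Nat.pow_le_pow_left hK1N 2
  refine ⟨?_, by rw [mul_pow]; omega⟩
  calc (2 * N) ^ 2 - K1 ^ 2 = 2 * N * (2 * N) - K1 ^ 2 := by rw [sq]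
    _ ≤ C'.ncard := hC'card
    _ ≤ C.ncard := hCmax C' hC'

/-- First part of the geometry lemma: a maximal-cardinality connected component of
B_{e₁} \ S_{e₁}(ξ) has at least (2N)² − K₁² ≥ 3N² vertices, when card S_{e₁}(ξ) = K₁ ≤ N. -/
theorem largest_component_card_lower_bound
    (N : ℕ) (hN : 1 ≤ N) (ξ : ℤ × ℤ → Fin 3) (K1 : ℕ)
    (hK1 : ({x ∈ box N (1, 0) | ξ x = 2}).ncard = K1) (hK1N : K1 ≤ N)
    (C : Set (ℤ × ℤ))
    (hC : IsComponent (box N (1, 0) \ {x | ξ x = 2}) C)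
    (hCmax : ∀ C', IsComponent (box N (1, 0) \ {x | ξ x = 2}) C' → C'.ncard ≤ C.ncard) :
    (2 * N) ^ 2 - K1 ^ 2 ≤ C.ncard ∧ 3 * N ^ 2 ≤ (2 * N) ^ 2 - K1 ^ 2 :=
  largest_component_card_lower_bound_general N hN ξ K1 hK1 hK1N C hCmax
end

section
/- Let N ≥ 1 be an integer and let ξ : ℤ² → {0,1,2} be a configuration with card S_0(ξ) = K0 and card S_{e1}(ξ) = K1 ≤ N. Let C1(ξ) be the largest connected component of B_{e1} \ S_{e1}(ξ), let C0(ξ) be the connected component of (B_0 ∪ B_{e1}) \ (S_0(ξ) ∪ S_{e1}(ξ)) containing C1(ξ), and let B_0(ξ) = {x ∈ B_0 ∪ B_{e1} : ξ(x) = 2 and x is adjacent to some point of C0(ξ)}. Then card B_0(ξ) ≥ √K0. -/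
open Set

lemma adjZ2_add_one_fst (t i : ℤ) : adjZ2 (t, i) (t + 1, i) := by
  simp [adjZ2]

lemma adjZ2_add_one_snd (j t : ℤ) : adjZ2 (j, t) (j, t + 1) := by
  simp [adjZ2]

lemma exists_mem_Ico_not_and_add_one {p : ℤ → Prop} {a b : ℤ} (hab : a ≤ b) (ha : ¬p a)
    (hb : p b) : ∃ t ∈ Ico a b, ¬p t ∧ p (t + 1) := by
  induction b, hab using Int.leInduction with
  | base => exact absurd hb ha
  | succ n han ih =>
    by_cases hn : p n
    · obtain ⟨t, ht, hpt⟩ := ih hn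
      exact ⟨t, Ico_subset_Ico_right (by lia) ht, hpt⟩
    · exact ⟨n, ⟨han, by lia⟩, hn, hb⟩

lemma Set.ncard_le_ncard_image_fst_mul_ncard_image_snd {α β : Type*} {s : Set (α × β)}
    (hs : s.Finite) : s.ncard ≤ (Prod.fst '' s).ncard * (Prod.snd '' s).ncard := by
  rw [← ncard_prod]
  exact ncard_le_ncard (fun x hx => ⟨mem_image_of_mem _ hx, mem_image_of_mem _ hx⟩)
    ((hs.image _).prod (hs.image _))

lemma Set.ncard_le_ncard_of_subset_image {α β : Type*} {s : Set β} {t : Set α} {f : α → β}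
    (ht : t.Finite) (h : s ⊆ f '' t) : s.ncard ≤ t.ncard :=
  (ncard_le_ncard h (ht.image f)).trans (ncard_image_le ht)

lemma Int.ncard_Icc (a b : ℤ) : (Icc a b).ncard = (b + 1 - a).toNat := by
  rw [← Finset.coe_Icc, ncard_coe_finset, Int.card_Icc]

namespace reachIn

variable {A : Set (ℤ × ℤ)} {x y z : ℤ × ℤ}

lemma mem_right (h : reachIn A x y) : y ∈ A := by
  obtain ⟨hx, hxy⟩ := h
  induction hxy with
  | refl => exact hx
  | tail _ hstep _ => exact hstep.2.1

lemma refl (hx : x ∈ A) : reachIn A x x :=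
  ⟨hx, .refl⟩

lemma trans (hxy : reachIn A x y) (hyz : reachIn A y z) : reachIn A x z :=
  ⟨hxy.1, hxy.2.trans hyz.2⟩

lemma tail (hxy : reachIn A x y) (hz : z ∈ A) (hyz : adjZ2 y z) : reachIn A x z :=
  ⟨hxy.1, hxy.2.tail ⟨hxy.mem_right, hz, hyz⟩⟩

lemma symm (h : reachIn A x y) : reachIn A y x := by
  obtain ⟨hx, hxy⟩ := h
  induction hxy with
  | refl => exact .refl hx
  | tail _ hstep ih => exact ⟨hstep.2.1, .head ⟨hstep.2.1, hstep.1, adjZ2_comm.1 hstep.2.2⟩ ih.2⟩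

lemma of_line_of_le {g : ℤ → ℤ × ℤ} (hg : ∀ t, adjZ2 (g t) (g (t + 1))) {a b : ℤ}
    (hab : a ≤ b) (hA : ∀ t ∈ Icc a b, g t ∈ A) : reachIn A (g a) (g b) := by
  induction b, hab using Int.leInduction with
  | base => exact .refl (hA a ⟨le_rfl, le_rfl⟩)
  | succ n han ih =>
    exact (ih fun t ht => hA t ⟨ht.1, ht.2.trans (by lia)⟩).tail
      (hA (n + 1) ⟨by lia, le_rfl⟩) (hg n)

lemma of_line {g : ℤ → ℤ × ℤ} (hg : ∀ t, adjZ2 (g t) (g (t + 1))) {a b : ℤ}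
    (hA : ∀ t ∈ uIcc a b, g t ∈ A) : reachIn A (g a) (g b) := by
  rcases le_total a b with hab | hba
  · exact of_line_of_le hg hab fun t ht => hA t (Icc_subset_uIcc ht)
  · exact (of_line_of_le hg hba fun t ht => hA t (Icc_subset_uIcc' ht)).symm

end reachIn

namespace IsComponent

variable {A C C' : Set (ℤ × ℤ)}

lemma subset (hC : IsComponent A C) : C ⊆ A := by
  obtain ⟨x, -, rfl⟩ := hC
  exact fun _ hy => hy.mem_right

lemma mem_of_adjZ2 (hC : IsComponent A C) {x y : ℤ × ℤ} (hy : y ∈ C) (hx : x ∈ A)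
    (hyx : adjZ2 y x) : x ∈ C := by
  obtain ⟨z, -, rfl⟩ := hC
  exact reachIn.tail hy hx hyx

lemma eq_of_mem (hC : IsComponent A C) (hC' : IsComponent A C') {z : ℤ × ℤ} (hz : z ∈ C)
    (hz' : z ∈ C') : C = C' := by
  obtain ⟨x, -, rfl⟩ := hC
  obtain ⟨x', -, rfl⟩ := hC'
  ext w
  exact ⟨fun hw => (reachIn.trans hz' (reachIn.symm hz)).trans hw,
    fun hw => (reachIn.trans hz (reachIn.symm hz')).trans hw⟩

lemma eq_of_ncard_lt_add (hC : IsComponent A C) (hC' : IsComponent A C') (hA : A.Finite)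
    (hlt : A.ncard < C.ncard + C'.ncard) : C = C' := by
  by_contra hne
  have hdisj : Disjoint C C' :=
    disjoint_left.2 fun z hz hz' => hne (hC.eq_of_mem hC' hz hz')
  have := ncard_le_ncard (union_subset hC.subset hC'.subset) hA
  rw [ncard_union_eq hdisj (hA.subset hC.subset) (hA.subset hC'.subset)] at this
  lia

end IsComponent

-- The paper's `B₀(ξ)` is `outerBoundary (B₀ ∪ B_{e₁}) {x | ξ x = 2} C₀(ξ)`.
def outerBoundary (U S C : Set (ℤ × ℤ)) : Set (ℤ × ℤ) :=
  {x ∈ U | x ∈ S ∧ ∃ y ∈ C, adjZ2 x y}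

namespace IsComponent

variable {U S C : Set (ℤ × ℤ)}

lemma mem_outerBoundary (hC : IsComponent (U \ S) C) {x y : ℤ × ℤ} (hxU : x ∈ U) (hxC : x ∉ C)
    (hy : y ∈ C) (hxy : adjZ2 x y) : x ∈ outerBoundary U S C :=
  ⟨hxU, by_contra fun hxS => hxC (hC.mem_of_adjZ2 hy ⟨hxU, hxS⟩ (adjZ2_comm.1 hxy)), y, hy, hxy⟩

lemma exists_line_mem_outerBoundary (hC : IsComponent (U \ S) C) {g : ℤ → ℤ × ℤ}
    (hg : ∀ t, adjZ2 (g t) (g (t + 1))) {a b : ℤ} (hU : ∀ t ∈ uIcc a b, g t ∈ U)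
    (ha : g a ∉ C) (hb : g b ∈ C) : ∃ t, g t ∈ outerBoundary U S C := by
  rcases le_total a b with hab | hba
  · obtain ⟨t, ht, hout, hin⟩ := exists_mem_Ico_not_and_add_one (p := (g · ∈ C)) hab ha hb
    exact ⟨t, hC.mem_outerBoundary (hU t (Icc_subset_uIcc (Ico_subset_Icc_self ht))) hout hin
      (hg t)⟩
  · obtain ⟨t, ht, hin, hout⟩ :=
      exists_mem_Ico_not_and_add_one (p := (g · ∉ C)) hba (not_not.2 hb) ha
    have ht' : t + 1 ∈ uIcc a b :=
      Icc_subset_uIcc' ⟨ht.1.trans (Int.le_add_one le_rfl), Int.add_one_le_of_lt ht.2⟩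
    exact ⟨t + 1, hC.mem_outerBoundary (hU _ ht') hout (not_not.1 hin) (adjZ2_comm.1 (hg t))⟩

variable {I J : Set ℤ}

lemma exists_mem_outerBoundary_snd_eq (hI : I.OrdConnected)
    (hC : IsComponent ((I ×ˢ J) \ S) C) {c₀ : ℤ} (hc₀ : c₀ ∈ I) {x : ℤ × ℤ} (hx : x ∈ I ×ˢ J)
    (hxC : x ∉ C) (hc₀C : (c₀, x.2) ∈ C) : ∃ γ ∈ outerBoundary (I ×ˢ J) S C, γ.2 = x.2 := by
  obtain ⟨t, ht⟩ := hC.exists_line_mem_outerBoundary (g := fun t => (t, x.2))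
    (fun t => adjZ2_add_one_fst t x.2) (a := x.1)
    (fun t ht => ⟨hI.uIcc_subset hx.1 hc₀ ht, hx.2⟩) hxC hc₀C
  exact ⟨_, ht, rfl⟩

lemma exists_mem_outerBoundary_fst_eq (hJ : J.OrdConnected)
    (hC : IsComponent ((I ×ˢ J) \ S) C) {x : ℤ × ℤ} (hx : x ∈ I ×ˢ J) (hxC : x ∉ C)
    (hcol : ∃ i ∈ J, (x.1, i) ∈ C) : ∃ γ ∈ outerBoundary (I ×ˢ J) S C, γ.1 = x.1 := by
  obtain ⟨i, hi, hiC⟩ := hcol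
  obtain ⟨t, ht⟩ := hC.exists_line_mem_outerBoundary (g := fun t => (x.1, t))
    (fun t => adjZ2_add_one_snd x.1 t) (a := x.2)
    (fun t ht => ⟨hx.1, hJ.uIcc_subset hx.2 hi ht⟩) hxC hiC
  exact ⟨_, ht, rfl⟩

theorem ncard_prod_diff_le_ncard_outerBoundary_sq (hI : I.OrdConnected) (hJ : J.OrdConnected)
    (hIfin : I.Finite) (hJfin : J.Finite) (hC : IsComponent ((I ×ˢ J) \ S) C) {c₀ : ℤ}
    (hc₀ : c₀ ∈ I) (hc₀C : ∀ i ∈ J, (c₀, i) ∈ C) {I₀ : Set ℤ} (hI₀ : I₀ ⊆ I)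
    (hI₀J : I₀.ncard ≤ J.ncard) :
    ((I₀ ×ˢ J) \ C).ncard ≤ (outerBoundary (I ×ˢ J) S C).ncard ^ 2 := by
  set X := (I₀ ×ˢ J) \ C
  set Γ := outerBoundary (I ×ˢ J) S C
  have hXU : X ⊆ I ×ˢ J := sdiff_subset.trans (prod_mono hI₀ subset_rfl)
  have hXfin : X.Finite := (hIfin.prod hJfin).subset hXU
  have hΓfin : Γ.Finite := (hIfin.prod hJfin).subset (sep_subset _ _)
  have hrows : (Prod.snd '' X).ncard ≤ Γ.ncard := by
    refine ncard_le_ncard_of_subset_image (f := Prod.snd) hΓfin ?_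
    rintro _ ⟨x, hx, rfl⟩
    exact hC.exists_mem_outerBoundary_snd_eq hI hc₀ (hXU hx) hx.2 (hc₀C _ hx.1.2)
  have hcols : (Prod.fst '' X).ncard ≤ Γ.ncard := by
    by_cases hfull : ∃ x ∈ X, ∀ i ∈ J, (x.1, i) ∉ C
    · obtain ⟨x, hx, hxcol⟩ := hfull
      have hJX : J ⊆ Prod.snd '' X := fun i hi => ⟨(x.1, i), ⟨⟨hx.1.1, hi⟩, hxcol i hi⟩, rfl⟩
      calc (Prod.fst '' X).ncard
          ≤ I₀.ncard := ncard_le_ncard (image_subset_iff.2 fun y hy => hy.1.1) (hIfin.subset hI₀)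
        _ ≤ J.ncard := hI₀J
        _ ≤ (Prod.snd '' X).ncard := ncard_le_ncard hJX (hXfin.image _)
        _ ≤ Γ.ncard := hrows
    · push Not at hfull
      refine ncard_le_ncard_of_subset_image (f := Prod.fst) hΓfin ?_
      rintro _ ⟨x, hx, rfl⟩
      exact hC.exists_mem_outerBoundary_fst_eq hJ (hXU hx) hx.2 (hfull x hx)
  calc X.ncard ≤ (Prod.fst '' X).ncard * (Prod.snd '' X).ncard :=
        ncard_le_ncard_image_fst_mul_ncard_image_snd hXfin
    _ ≤ Γ.ncard ^ 2 := by rw [sq]; exact Nat.mul_le_mul hcols hrows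

end IsComponent

section FreeLines

variable {I J : Set ℤ} {S : Set (ℤ × ℤ)}

-- Column `c` (row `d`) of `I ×ˢ J` is free of `S` iff `c ∉ Prod.fst '' ((I ×ˢ J) ∩ S)`
-- (`d ∉ Prod.snd '' ((I ×ˢ J) ∩ S)`).

lemma reachIn_sdiff_of_row_free (hI : I.OrdConnected) {d : ℤ} (hd : d ∈ J)
    (hdS : d ∉ Prod.snd '' ((I ×ˢ J) ∩ S)) {a b : ℤ} (ha : a ∈ I) (hb : b ∈ I) :
    reachIn ((I ×ˢ J) \ S) (a, d) (b, d) :=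
  reachIn.of_line (g := fun t => (t, d)) (fun t => adjZ2_add_one_fst t d) fun t ht =>
    have hR : (t, d) ∈ I ×ˢ J := ⟨hI.uIcc_subset ha hb ht, hd⟩
    ⟨hR, fun hS => hdS ⟨_, ⟨hR, hS⟩, rfl⟩⟩

lemma reachIn_sdiff_of_column_free (hJ : J.OrdConnected) {c : ℤ} (hc : c ∈ I)
    (hcS : c ∉ Prod.fst '' ((I ×ˢ J) ∩ S)) {a b : ℤ} (ha : a ∈ J) (hb : b ∈ J) :
    reachIn ((I ×ˢ J) \ S) (c, a) (c, b) :=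
  reachIn.of_line (g := fun t => (c, t)) (fun t => adjZ2_add_one_snd c t) fun t ht =>
    have hR : (c, t) ∈ I ×ˢ J := ⟨hc, hJ.uIcc_subset ha hb ht⟩
    ⟨hR, fun hS => hcS ⟨_, ⟨hR, hS⟩, rfl⟩⟩

lemma reachIn_sdiff_of_fst_notMem_or_snd_notMem (hI : I.OrdConnected) (hJ : J.OrdConnected)
    {c d : ℤ} (hc : c ∈ I) (hcS : c ∉ Prod.fst '' ((I ×ˢ J) ∩ S)) (hd : d ∈ J)
    (hdS : d ∉ Prod.snd '' ((I ×ˢ J) ∩ S)) {x : ℤ × ℤ} (hx : x ∈ I ×ˢ J)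
    (hfree : x.1 ∉ Prod.fst '' ((I ×ˢ J) ∩ S) ∨ x.2 ∉ Prod.snd '' ((I ×ˢ J) ∩ S)) :
    reachIn ((I ×ˢ J) \ S) (c, d) x := by
  rcases hfree with hxS | hxS
  · exact (reachIn_sdiff_of_row_free hI hd hdS hc hx.1).trans
      (reachIn_sdiff_of_column_free hJ hx.1 hxS hd hx.2)
  · exact (reachIn_sdiff_of_column_free hJ hc hcS hd hx.2).trans
      (reachIn_sdiff_of_row_free hI hx.2 hxS hc hx.1)

theorem IsComponent.exists_column_subset (hI : I.OrdConnected) (hJ : J.OrdConnected)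
    (hIfin : I.Finite) (hJfin : J.Finite) (hKI : ((I ×ˢ J) ∩ S).ncard < I.ncard)
    (hKJ : ((I ×ˢ J) ∩ S).ncard < J.ncard)
    (hK : 2 * ((I ×ˢ J) ∩ S).ncard ^ 2 < I.ncard * J.ncard) {C : Set (ℤ × ℤ)}
    (hC : IsComponent ((I ×ˢ J) \ S) C)
    (hCmax : ∀ C', IsComponent ((I ×ˢ J) \ S) C' → C'.ncard ≤ C.ncard) :
    ∃ c₀ ∈ I, ∀ i ∈ J, (c₀, i) ∈ C := by
  set T := (I ×ˢ J) ∩ S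
  have hRfin : (I ×ˢ J).Finite := hIfin.prod hJfin
  have hTfin : T.Finite := hRfin.subset inter_subset_left
  obtain ⟨c₀, hc₀, hc₀T⟩ := exists_mem_notMem_of_ncard_lt_ncard
    ((ncard_image_le (f := Prod.fst) hTfin).trans_lt hKI) (hTfin.image _)
  obtain ⟨d₀, hd₀, hd₀T⟩ := exists_mem_notMem_of_ncard_lt_ncard
    ((ncard_image_le (f := Prod.snd) hTfin).trans_lt hKJ) (hTfin.image _)
  set W := {y | reachIn ((I ×ˢ J) \ S) (c₀, d₀) y}
  have hbase : (c₀, d₀) ∈ (I ×ˢ J) \ S :=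
    ⟨⟨hc₀, hd₀⟩, fun hS => hc₀T ⟨(c₀, d₀), ⟨⟨hc₀, hd₀⟩, hS⟩, rfl⟩⟩
  have hW : IsComponent ((I ×ˢ J) \ S) W := ⟨(c₀, d₀), hbase, rfl⟩
  have hcross : ∀ x ∈ I ×ˢ J, x.1 ∉ Prod.fst '' T ∨ x.2 ∉ Prod.snd '' T → x ∈ W :=
    fun x hx => reachIn_sdiff_of_fst_notMem_or_snd_notMem hI hJ hc₀ hc₀T hd₀ hd₀T hx
  have hWfin : W.Finite := hRfin.subset (hW.subset.trans sdiff_subset)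
  have hrest : ((I ×ˢ J) \ W).ncard ≤ T.ncard ^ 2 := by
    have hsub : (I ×ˢ J) \ W ⊆ (Prod.fst '' T) ×ˢ (Prod.snd '' T) := fun x ⟨hx, hxW⟩ => by
      by_contra h
      rw [mem_prod, not_and_or] at h
      exact hxW (hcross x hx h)
    calc ((I ×ˢ J) \ W).ncard ≤ (Prod.fst '' T).ncard * (Prod.snd '' T).ncard :=
          ncard_prod ▸ ncard_le_ncard hsub ((hTfin.image _).prod (hTfin.image _))
      _ ≤ T.ncard ^ 2 := sq T.ncard ▸ Nat.mul_le_mul (ncard_image_le hTfin) (ncard_image_le hTfin)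
  have hCW : C = W := by
    refine hC.eq_of_ncard_lt_add hW (hRfin.subset sdiff_subset) ?_
    have hsplit := ncard_le_ncard_sdiff_add_ncard (I ×ˢ J) W hWfin
    have hA := ncard_le_ncard (sdiff_subset : (I ×ˢ J) \ S ⊆ I ×ˢ J) hRfin
    have hWC := hCmax W hW
    rw [ncard_prod] at hsplit hA
    lia
  exact ⟨c₀, hc₀, fun i hi => hCW ▸ hcross _ ⟨hc₀, hi⟩ (Or.inl hc₀T)⟩

end FreeLines

lemma box_zero_zero (N : ℕ) : box N (0, 0) = Icc (-N : ℤ) (N - 1) ×ˢ Icc (-N : ℤ) (N - 1) := by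
  ext x
  simp only [box, mem_ofPred_eq, mem_prod, mem_Icc]
  lia

lemma box_one_zero (N : ℕ) : box N (1, 0) = Icc (N : ℤ) (3 * N - 1) ×ˢ Icc (-N : ℤ) (N - 1) := by
  ext x
  simp only [box, mem_ofPred_eq, mem_prod, mem_Icc]
  lia

lemma box_zero_zero_union_box_one_zero (N : ℕ) :
    box N (0, 0) ∪ box N (1, 0) = Icc (-N : ℤ) (3 * N - 1) ×ˢ Icc (-N : ℤ) (N - 1) := by
  ext x
  simp only [box, mem_union, mem_ofPred_eq, mem_prod, mem_Icc]
  lia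

/-- Second part of the geometry lemma: if card S₀(ξ) = K₀ and card S_{e₁}(ξ) = K₁ ≤ N,
then the number of symbionts adjacent to the component C₀(ξ) of
(B₀ ∪ B_{e₁}) \ (S₀(ξ) ∪ S_{e₁}(ξ)) containing the largest component C₁(ξ) of
B_{e₁} \ S_{e₁}(ξ) is at least √K₀. -/
theorem boundary_symbionts_card_lower_bound
    (N : ℕ) (hN : 1 ≤ N) (ξ : ℤ × ℤ → Fin 3) (K0 K1 : ℕ)
    (hK0 : ({x ∈ box N (0, 0) | ξ x = 2}).ncard = K0)
    (hK1 : ({x ∈ box N (1, 0) | ξ x = 2}).ncard = K1) (hK1N : K1 ≤ N)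
    (C1 : Set (ℤ × ℤ))
    (hC1 : IsComponent (box N (1, 0) \ {x | ξ x = 2}) C1)
    (hC1max : ∀ C', IsComponent (box N (1, 0) \ {x | ξ x = 2}) C' → C'.ncard ≤ C1.ncard)
    (C0 : Set (ℤ × ℤ))
    (hC0 : IsComponent ((box N (0, 0) ∪ box N (1, 0)) \ {x | ξ x = 2}) C0)
    (hC1C0 : C1 ⊆ C0) :
    Real.sqrt K0 ≤
      (({x ∈ box N (0, 0) ∪ box N (1, 0) | ξ x = 2 ∧ ∃ y ∈ C0, adjZ2 x y}).ncard : ℝ) := by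
  have hside : (Icc (-N : ℤ) (N - 1)).ncard = 2 * N := by rw [Int.ncard_Icc]; lia
  have hside' : (Icc (N : ℤ) (3 * N - 1)).ncard = 2 * N := by rw [Int.ncard_Icc]; lia
  rw [box_one_zero] at hK1 hC1 hC1max
  have hK1' : ((Icc (N : ℤ) (3 * N - 1) ×ˢ Icc (-N : ℤ) (N - 1)) ∩ {x | ξ x = 2}).ncard = K1 :=
    hK1
  rw [box_zero_zero] at hK0
  rw [box_zero_zero_union_box_one_zero] at hC0 ⊢
  obtain ⟨c₀, hc₀, hc₀C1⟩ := hC1.exists_column_subset ordConnected_Icc ordConnected_Icc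
    (finite_Icc _ _) (finite_Icc _ _) (by rw [hK1', hside']; lia)
    (by rw [hK1', hside]; lia) (by rw [hK1', hside, hside']; nlinarith) hC1max
  have hK0C0 : K0 ≤ ((Icc (-N : ℤ) (N - 1) ×ˢ Icc (-N : ℤ) (N - 1)) \ C0).ncard :=
    hK0 ▸ ncard_le_ncard (fun x hx => ⟨hx.1, fun hxC => (hC0.subset hxC).2 hx.2⟩)
      ((finite_Icc _ _).prod (finite_Icc _ _) |>.subset sdiff_subset)
  have hΓ := hC0.ncard_prod_diff_le_ncard_outerBoundary_sq ordConnected_Icc ordConnected_Icc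
    (finite_Icc _ _) (finite_Icc _ _) (Icc_subset_Icc_left (by lia) hc₀)
    (fun i hi => hC1C0 (hc₀C1 i hi)) (Icc_subset_Icc_right (by lia)) le_rfl
  rw [Real.sqrt_le_left (Nat.cast_nonneg _)]
  exact_mod_cast hK0C0.trans hΓ
end
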